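/- arXiv:0812.1729 — 3 statements merged into one kernel-verified Lean document; each statement's English description precedes it below -/
import Mathlib

section
/- Let A be a deterministic parity word automaton over a finite nonempty alphabet Σ in which every state is reachable from q₀, and let ι ∈ {0,1} and κ ≥ ι be natural numbers. Then there exists a deterministic parity word automaton B over Σ with all ranks in {ι, ι+1, …, κ} and L(B) = L(A) if and only if A contains no (ι,κ)‾-flower (that is, no (1,κ+1)-flower when ι = 0, and no (0,κ−1)-flower when ι = 1). -/
open Filter

/-- Parity acceptance: the largest value occurring infinitely often is even. -/
def ParityAccept (f : ℕ → ℕ) : Prop :=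
  Even (sSup {r : ℕ | ∃ᶠ n in atTop, f n = r})

/-- A deterministic parity word automaton over alphabet `Alpha` with state set `Q`. -/
structure DPWA (Alpha : Type) (Q : Type) where
  init : Q
  delta : Q → Alpha → Q
  rank : Q → ℕ

namespace DPWA

variable {Alpha Q : Type}

/-- The state of the run of `M` on `w` after `n` letters. -/
def run (M : DPWA Alpha Q) (w : ℕ → Alpha) : ℕ → Q
  | 0 => M.init
  | n + 1 => M.delta (run M w n) (w n)

/-- The language recognised by `M`. -/
def Lang (M : DPWA Alpha Q) : Set (ℕ → Alpha) :=
  {w | ParityAccept fun n => M.rank (M.run w n)}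

/-- The state reached from `q` following a finite word. -/
def follow (M : DPWA Alpha Q) (q : Q) (steps : List Alpha) : Q :=
  steps.foldl M.delta q

/-- All states visited along a path, the starting state included. -/
def statesOn (M : DPWA Alpha Q) (q : Q) (steps : List Alpha) : List Q :=
  List.scanl M.delta q steps

/-- The largest rank of a state visited along a path. -/
def maxRankOn (M : DPWA Alpha Q) (q : Q) (steps : List Alpha) : ℕ :=
  ((M.statesOn q steps).map M.rank).foldr max 0

/-- `steps` is a loop at `q` (a path of positive length from `q` to `q`). -/
def IsLoop (M : DPWA Alpha Q) (q : Q) (steps : List Alpha) : Prop :=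
  steps ≠ [] ∧ M.follow q steps = q

/-- `M` contains an `(i,k)`-flower. -/
def HasFlower (M : DPWA Alpha Q) (i k : ℕ) : Prop :=
  ∃ (q : Q) (lam : ℕ → List Alpha),
    (∀ j, i ≤ j → j ≤ k → M.IsLoop q (lam j) ∧ M.maxRankOn q (lam j) % 2 = j % 2) ∧
    (∀ j, i ≤ j → j < k → M.maxRankOn q (lam j) < M.maxRankOn q (lam (j + 1)))

/-- `q` is reachable from the initial state. -/
def Reachable (M : DPWA Alpha Q) (q : Q) : Prop :=
  ∃ steps, M.follow M.init steps = q

end DPWA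

/-- Wadge reducibility. -/
def WadgeLE {X Y : Type} [TopologicalSpace X] [TopologicalSpace Y]
    (A : Set X) (B : Set Y) : Prop :=
  ∃ φ : X → Y, Continuous φ ∧ A = φ ⁻¹' B

/-- The alphabet `{i, i+1, …, k}`. -/
def IdxAlpha (i k : ℕ) : Type := {n : ℕ // i ≤ n ∧ n ≤ k}

instance (i k : ℕ) : TopologicalSpace (IdxAlpha i k) := ⊥
instance (i k : ℕ) : DiscreteTopology (IdxAlpha i k) := ⟨rfl⟩

/-- The parity language `L_{(i,k)}`: sequences over `{i,…,k}` whose largest value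
occurring infinitely often is even. -/
def Lidx (i k : ℕ) : Set (ℕ → IdxAlpha i k) :=
  {w | Even (sSup {r : ℕ | ∃ᶠ n in atTop, (w n).1 = r})}

/-!
Both directions compare loops through the parity of their maximal rank.

If `L(B) = L(A)`, a flower of `A` at a reachable state `q` transfers to `B`. Pumping the petals
with idempotent powers of `B`'s transitions gives words `V_j` that loop at `q` in `A` with the
maximal rank of petal `j`, and that all loop at one state `p` of `B` reached by a word leading
`A` to `q`. Since `x V^ω` is accepted by both automata or by neither, the maximal `B`-ranks on
these loops have the parities of the petals and increase, so `B` has a flower of the same index;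
with ranks in `{ι, …, κ}` that is impossible for the dual index.

Conversely, give `q` the largest value of an alternating chain `S₀ ⊆ ⋯ ⊆ Sₘ` of loop sets in
which `q` has maximal rank in `Sₘ`, the value being `m` plus the least number `≥ ι` with the
parity of the maximal rank on `S₀`. Such a chain is a flower, so without the dual flower all
values are at most `κ`. On every loop set the maximal new rank has the parity of the maximal old
rank, since a state realising the wrong parity would extend a chain; as acceptance of a run is
decided by the loop set of states it visits infinitely often, the language is unchanged.
-/

section InfOften

def infOften {β : Type*} (ρ : ℕ → β) : Set β := {s | ∃ᶠ n in atTop, ρ n = s}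

lemma infOften_comp_add {β : Type*} (ρ : ℕ → β) (m : ℕ) :
    infOften (fun n => ρ (n + m)) = infOften ρ := by
  ext s
  exact (frequently_map (P := fun n => ρ n = s)).symm.trans (by rw [map_add_atTop_eq_nat]; rfl)

lemma Function.Periodic.infOften_eq_range {β : Type*} {ρ : ℕ → β} {d : ℕ}
    (hρ : Function.Periodic ρ d) (hd : 0 < d) : infOften ρ = Set.range ρ := by
  refine Set.Subset.antisymm (fun s hs => ?_) ?_
  · obtain ⟨n, -, rfl⟩ := frequently_atTop.1 hs 0
    exact ⟨n, rfl⟩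
  · rintro _ ⟨m, rfl⟩
    exact frequently_atTop.2 fun N =>
      ⟨m + N * d, (Nat.le_mul_of_pos_right N hd).trans (Nat.le_add_left _ _), hρ.nat_mul N m⟩

variable {β : Type*} [Finite β]

lemma eventually_mem_infOften (ρ : ℕ → β) : ∀ᶠ n in atTop, ρ n ∈ infOften ρ := by
  by_contra h
  have hout : ∃ᶠ n in atTop, ∃ s, s ∉ infOften ρ ∧ ρ n = s :=
    (not_eventually.1 h).mono fun n hn => ⟨ρ n, hn, rfl⟩
  obtain ⟨s, hs⟩ := frequently_exists.1 hout
  obtain ⟨_, hsn, -⟩ := hs.exists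
  exact hsn (hs.mono fun _ h => h.2)

lemma infOften_nonempty (ρ : ℕ → β) : (infOften ρ).Nonempty :=
  let ⟨_, hn⟩ := (eventually_mem_infOften ρ).exists
  ⟨_, hn⟩

lemma infOften_comp {γ : Type*} (f : β → γ) (ρ : ℕ → β) :
    infOften (f ∘ ρ) = f '' infOften ρ := by
  ext r
  constructor
  · intro hr
    have hr' : ∃ᶠ n in atTop, ∃ s, f s = r ∧ ρ n = s := hr.mono fun n hn => ⟨ρ n, hn, rfl⟩
    obtain ⟨s, hs⟩ := frequently_exists.1 hr'
    obtain ⟨_, hsr, -⟩ := hs.exists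
    exact ⟨s, hs.mono fun _ h => h.2, hsr⟩
  · rintro ⟨s, hs, rfl⟩
    exact hs.mono fun n hn => by simp [hn]

lemma parityAccept_iff (f : β → ℕ) (ρ : ℕ → β) :
    ParityAccept (fun n => f (ρ n)) ↔ Even (sSup (f '' infOften ρ)) := by
  rw [← infOften_comp]
  rfl

end InfOften

lemma Function.exists_iterate_idempotent {α : Type*} [Finite α] (f : α → α) :
    ∃ e ≠ 0, ∀ x, f^[e] (f^[e] x) = f^[e] x := by
  obtain ⟨m, n, hmn, heq⟩ := Finite.exists_ne_map_eq_of_infinite fun n : ℕ => f^[n]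
  wlog hlt : m < n generalizing m n
  · exact this n m hmn.symm heq.symm (by omega)
  have hshift : ∀ k, m ≤ k → f^[k + (n - m)] = f^[k] := fun k hk => by
    rw [show k + (n - m) = k - m + n by omega, Function.iterate_add, ← heq,
      ← Function.iterate_add, Nat.sub_add_cancel hk]
  have hper : ∀ j k, m ≤ k → f^[k + j * (n - m)] = f^[k] := by
    intro j
    induction j with
    | zero => simp
    | succ j ih =>
      intro k hk
      rw [Nat.succ_mul, ← add_assoc, hshift _ (by omega), ih k hk]
  have hle : m + 1 ≤ (m + 1) * (n - m) := Nat.le_mul_of_pos_right _ (by omega)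
  refine ⟨(m + 1) * (n - m), by omega, fun x => ?_⟩
  rw [← Function.iterate_add_apply, hper _ _ (by omega)]

namespace DPWA

variable {Alpha Q Q' : Type}

section Paths

variable (M : DPWA Alpha Q)

@[simp] lemma follow_nil (q : Q) : M.follow q [] = q := rfl

@[simp] lemma follow_cons (q : Q) (a : Alpha) (l : List Alpha) :
    M.follow q (a :: l) = M.follow (M.delta q a) l := rfl

@[simp] lemma follow_append (q : Q) (s t : List Alpha) :
    M.follow q (s ++ t) = M.follow (M.follow q s) t :=
  List.foldl_append

lemma follow_flatten_replicate (q : Q) (l : List Alpha) (e : ℕ) :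
    M.follow q (List.replicate e l).flatten = (M.follow · l)^[e] q := by
  induction e generalizing q with
  | zero => rfl
  | succ e ih => simp [List.replicate_succ, ih]

def visited (q : Q) (l : List Alpha) : Set Q := {x | x ∈ M.statesOn q l}

lemma mem_visited_iff {q x : Q} {l : List Alpha} :
    x ∈ M.visited q l ↔ ∃ b ≤ l.length, M.follow q (l.take b) = x := by
  simp only [visited, statesOn, Set.mem_ofPred_eq, List.mem_iff_getElem, List.getElem_scanl,
    List.length_scanl, Nat.lt_succ_iff, follow, exists_prop]

lemma self_mem_visited (q : Q) (l : List Alpha) : q ∈ M.visited q l :=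
  M.mem_visited_iff.2 ⟨0, Nat.zero_le _, rfl⟩

lemma visited_append (q : Q) (s t : List Alpha) :
    M.visited q (s ++ t) = M.visited q s ∪ M.visited (M.follow q s) t := by
  induction s generalizing q with
  | nil =>
    simpa [visited, statesOn] using (Set.insert_eq_of_mem (M.self_mem_visited q t)).symm
  | cons a s ih =>
    ext x
    have hx := Set.ext_iff.1 (ih (M.delta q a)) x
    simp only [visited, Set.mem_union, Set.mem_ofPred_eq] at hx ⊢
    simp only [List.cons_append, statesOn, List.scanl_cons, List.mem_cons, follow_cons] at hx ⊢
    rw [hx, or_assoc]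

variable {M}

lemma IsLoop.append {q : Q} {s t : List Alpha} (hs : M.IsLoop q s) (ht : M.IsLoop q t) :
    M.IsLoop q (s ++ t) :=
  ⟨by simp [hs.1], by rw [follow_append, hs.2, ht.2]⟩

lemma IsLoop.flatten_replicate {q : Q} {l : List Alpha} (hl : M.IsLoop q l) {e : ℕ}
    (he : e ≠ 0) : M.IsLoop q (List.replicate e l).flatten :=
  ⟨by simp [he, hl.1], by rw [follow_flatten_replicate, Function.iterate_fixed hl.2]⟩

variable (M) in
lemma visited_flatten_replicate {q : Q} {l : List Alpha} (hl : M.follow q l = q) {e : ℕ}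
    (he : e ≠ 0) : M.visited q (List.replicate e l).flatten = M.visited q l := by
  obtain ⟨e, rfl⟩ := Nat.exists_eq_succ_of_ne_zero he
  induction e with
  | zero => simp
  | succ e ih =>
    rw [List.replicate_succ, List.flatten_cons, visited_append, hl, ih e.succ_ne_zero,
      Set.union_self]

lemma IsLoop.exists_rotate {q x : Q} {l : List Alpha} (hl : M.IsLoop q l)
    (hx : x ∈ M.visited q l) : ∃ l', M.IsLoop x l' ∧ M.visited x l' = M.visited q l := by
  obtain ⟨b, -, rfl⟩ := M.mem_visited_iff.1 hx
  have hsplit := List.take_append_drop b l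
  have hback : M.follow (M.follow q (l.take b)) (l.drop b) = q := by
    rw [← follow_append, hsplit, hl.2]
  refine ⟨l.drop b ++ l.take b, ⟨fun h => hl.1 ?_, by rw [follow_append, hback]⟩, ?_⟩
  · rw [← hsplit, (List.append_eq_nil_iff.1 h).1, (List.append_eq_nil_iff.1 h).2, List.append_nil]
  · conv_rhs => rw [← hsplit]
    rw [visited_append, visited_append, hback, Set.union_comm]

end Paths

section Ranks

variable (M : DPWA Alpha Q)

noncomputable def supRank (S : Set Q) : ℕ := sSup (M.rank '' S)

lemma rank_le_maxRankOn {q x : Q} {l : List Alpha} (hx : x ∈ M.visited q l) :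
    M.rank x ≤ M.maxRankOn q l :=
  List.le_max_of_le (List.mem_map_of_mem hx) le_rfl

lemma exists_rank_eq_maxRankOn (q : Q) (l : List Alpha) :
    ∃ x ∈ M.visited q l, M.rank x = M.maxRankOn q l := by
  have hne : (M.statesOn q l).map M.rank ≠ [] := by simp [statesOn]
  exact List.mem_map.1 (List.maximum_mem (List.foldr_max_of_ne_nil hne).symm)

lemma maxRankOn_eq_supRank (q : Q) (l : List Alpha) :
    M.maxRankOn q l = M.supRank (M.visited q l) := by
  obtain ⟨x, hx, h⟩ := M.exists_rank_eq_maxRankOn q l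
  have hgreatest : IsGreatest (M.rank '' M.visited q l) (M.maxRankOn q l) := by
    refine ⟨⟨x, hx, h⟩, ?_⟩
    rintro _ ⟨y, hy, rfl⟩
    exact M.rank_le_maxRankOn hy
  exact hgreatest.csSup_eq.symm

lemma maxRankOn_flatten_replicate {q : Q} {l : List Alpha} (hl : M.follow q l = q) {e : ℕ}
    (he : e ≠ 0) : M.maxRankOn q (List.replicate e l).flatten = M.maxRankOn q l := by
  rw [maxRankOn_eq_supRank, maxRankOn_eq_supRank, M.visited_flatten_replicate hl he]

variable [Finite Q]

lemma rank_le_supRank {S : Set Q} {x : Q} (hx : x ∈ S) : M.rank x ≤ M.supRank S :=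
  le_csSup (Set.toFinite _).bddAbove (Set.mem_image_of_mem _ hx)

lemma exists_rank_eq_supRank {S : Set Q} (hS : S.Nonempty) : ∃ x ∈ S, M.rank x = M.supRank S :=
  (hS.image _).csSup_mem (Set.toFinite _)

lemma supRank_union {S T : Set Q} (hS : S.Nonempty) (hT : T.Nonempty) :
    M.supRank (S ∪ T) = max (M.supRank S) (M.supRank T) := by
  rw [supRank, Set.image_union]
  exact csSup_union (Set.toFinite _).bddAbove (hS.image _) (Set.toFinite _).bddAbove (hT.image _)

lemma maxRankOn_append (q : Q) (s t : List Alpha) :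
    M.maxRankOn q (s ++ t) = max (M.maxRankOn q s) (M.maxRankOn (M.follow q s) t) := by
  simp only [maxRankOn_eq_supRank, visited_append]
  exact M.supRank_union ⟨q, M.self_mem_visited q s⟩ ⟨_, M.self_mem_visited _ t⟩

end Ranks

section LoopSets

variable {M : DPWA Alpha Q}

variable (M) in
def IsLoopSet (S : Set Q) : Prop := ∃ q l, M.IsLoop q l ∧ M.visited q l = S

lemma IsLoopSet.nonempty {S : Set Q} (hS : M.IsLoopSet S) : S.Nonempty := by
  obtain ⟨q, l, -, rfl⟩ := hS
  exact ⟨q, M.self_mem_visited q l⟩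

lemma IsLoopSet.exists_isLoop {S : Set Q} {x : Q} (hS : M.IsLoopSet S) (hx : x ∈ S) :
    ∃ l, M.IsLoop x l ∧ M.visited x l = S := by
  obtain ⟨q, l, hl, rfl⟩ := hS
  exact hl.exists_rotate hx

lemma IsLoopSet.union {S T : Set Q} {x : Q} (hS : M.IsLoopSet S) (hT : M.IsLoopSet T)
    (hxS : x ∈ S) (hxT : x ∈ T) : M.IsLoopSet (S ∪ T) := by
  obtain ⟨s, hs, rfl⟩ := hS.exists_isLoop hxS
  obtain ⟨t, ht, rfl⟩ := hT.exists_isLoop hxT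
  exact ⟨x, s ++ t, hs.append ht, by rw [visited_append, hs.2]⟩

end LoopSets

section Runs

variable (M : DPWA Alpha Q)

lemma run_get_eq_follow_take (w : Stream' Alpha) (n : ℕ) :
    M.run w.get n = M.follow M.init (w.take n) := by
  induction n with
  | zero => rfl
  | succ n ih => rw [Stream'.take_succ', follow_append, ← ih]; rfl

lemma run_get_add (w : Stream' Alpha) (m d : ℕ) :
    M.run w.get (m + d) = M.follow (M.run w.get m) ((w.drop m).take d) := by
  rw [run_get_eq_follow_take, run_get_eq_follow_take, Stream'.take_add, follow_append]

lemma visited_run_get (w : Stream' Alpha) (m d : ℕ) :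
    M.visited (M.run w.get m) ((w.drop m).take d) =
      (fun b => M.run w.get (m + b)) '' Set.Iic d := by
  ext x
  simp only [mem_visited_iff, Stream'.length_take, Stream'.take_take, Set.mem_image,
    Set.mem_Iic]
  refine exists_congr fun b => and_congr_right fun hb => ?_
  rw [min_eq_right hb, run_get_add]

lemma infOften_run_append_cycle {x l : List Alpha} {p : Q} (hx : M.follow M.init x = p)
    (hl : M.IsLoop p l) :
    infOften (M.run (x ++ₛ Stream'.cycle l hl.1).get) = M.visited p l := by
  set c := Stream'.cycle l hl.1
  have hcyc : c = l ++ₛ c := Stream'.cycle_eq _ _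
  have hlen : 0 < l.length := List.length_pos_iff.2 hl.1
  have hprefix : ∀ b ≤ l.length, M.follow p (c.take b) = M.follow p (l.take b) := by
    intro b hb
    rw [hcyc, Stream'.take_append_of_le_length _ _ _ hb]
  have hper : Function.Periodic (fun n => M.follow p (c.take n)) l.length := by
    intro n
    dsimp only
    conv_lhs => rw [add_comm, hcyc]
    rw [← Stream'.append_take, follow_append, hl.2]
  have hrun : (fun n => M.run (x ++ₛ c).get (n + x.length)) = fun n => M.follow p (c.take n) := by
    funext n
    rw [run_get_eq_follow_take, add_comm, ← Stream'.append_take, follow_append, hx]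
  rw [← infOften_comp_add _ x.length, hrun, hper.infOften_eq_range hlen]
  ext y
  simp only [Set.mem_range, mem_visited_iff]
  constructor
  · rintro ⟨n, rfl⟩
    have hmod := Nat.mod_lt n hlen
    exact ⟨n % l.length, hmod.le, by rw [← hprefix _ hmod.le, hper.map_mod_nat]⟩
  · rintro ⟨b, hb, rfl⟩
    exact ⟨b, hprefix b hb⟩

variable [Finite Q]

lemma mem_lang_iff (w : ℕ → Alpha) : w ∈ M.Lang ↔ Even (M.supRank (infOften (M.run w))) :=
  parityAccept_iff _ _

lemma mem_lang_append_cycle_iff {x l : List Alpha} {p : Q} (hx : M.follow M.init x = p)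
    (hl : M.IsLoop p l) :
    (x ++ₛ Stream'.cycle l hl.1).get ∈ M.Lang ↔ Even (M.maxRankOn p l) := by
  rw [mem_lang_iff, infOften_run_append_cycle M hx hl, maxRankOn_eq_supRank]

lemma isLoopSet_infOften_run (w : ℕ → Alpha) : M.IsLoopSet (infOften (M.run w)) := by
  obtain ⟨w, rfl⟩ : ∃ s : Stream' Alpha, s.get = w := ⟨w, rfl⟩
  obtain ⟨N, hN⟩ := eventually_atTop.1 (eventually_mem_infOften (M.run w.get))
  obtain ⟨q, hq⟩ := infOften_nonempty (M.run w.get)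
  obtain ⟨m, hmN, rfl⟩ := frequently_atTop.1 hq N
  have hvisit : ∀ᶠ T in atTop,
      ∀ s ∈ infOften (M.run w.get), ∃ b ≤ T - m, M.run w.get (m + b) = s := by
    refine (Set.toFinite _).eventually_all.2 fun s hs => ?_
    obtain ⟨t, hmt, rfl⟩ := frequently_atTop.1 hs m
    exact eventually_atTop.2 ⟨t, fun T hT => ⟨t - m, by omega, by rw [Nat.add_sub_cancel' hmt]⟩⟩
  obtain ⟨T, ⟨hvT, hmT⟩, hTq⟩ := ((hvisit.and (eventually_gt_atTop m)).and_frequently hq).exists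
  refine ⟨M.run w.get m, (w.drop m).take (T - m), ⟨?_, ?_⟩, ?_⟩
  · rw [← List.length_pos_iff, Stream'.length_take]
    omega
  · rw [← run_get_add, Nat.add_sub_cancel' hmT.le, hTq]
  · rw [visited_run_get]
    ext s
    refine ⟨?_, fun hs => ?_⟩
    · rintro ⟨b, -, rfl⟩
      exact hN _ (by omega)
    · obtain ⟨b, hb, rfl⟩ := hvT s hs
      exact ⟨b, hb, rfl⟩

end Runs

section Flowers

variable {M : DPWA Alpha Q}

variable (M) in
/-- `M.HasFlower a b` is by definition `∃ q lam, M.IsFlower q lam a b`. -/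
def IsFlower (q : Q) (lam : ℕ → List Alpha) (a b : ℕ) : Prop :=
  (∀ j, a ≤ j → j ≤ b → M.IsLoop q (lam j) ∧ M.maxRankOn q (lam j) % 2 = j % 2) ∧
    (∀ j, a ≤ j → j < b → M.maxRankOn q (lam j) < M.maxRankOn q (lam (j + 1)))

lemma HasFlower.mono {a b a' b' : ℕ} (h : M.HasFlower a b) (ha : a ≤ a') (hb : b' ≤ b) :
    M.HasFlower a' b' := by
  obtain ⟨q, lam, hloop, hlt⟩ := h
  exact ⟨q, lam, fun j h1 h2 => hloop j (by omega) (by omega),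
    fun j h1 h2 => hlt j (by omega) (by omega)⟩

lemma HasFlower.shift {a b c : ℕ} (h : M.HasFlower a b) (hab : a ≤ b) (hpar : a % 2 = c % 2) :
    M.HasFlower c (c + (b - a)) := by
  obtain ⟨q, lam, hloop, hlt⟩ := h
  refine ⟨q, fun j => lam (j - c + a), fun j h1 h2 => ?_, fun j h1 h2 => ?_⟩
  · obtain ⟨hl, hmod⟩ := hloop (j - c + a) (by omega) (by omega)
    exact ⟨hl, show M.maxRankOn q (lam (j - c + a)) % 2 = j % 2 by omega⟩
  · simpa only [show j + 1 - c + a = j - c + a + 1 by omega] using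
      hlt (j - c + a) (by omega) (by omega)

lemma IsFlower.update_succ {q : Q} {lam : ℕ → List Alpha} {a b : ℕ} {l : List Alpha}
    (h : M.IsFlower q lam a b) (hl : M.IsLoop q l) (hpar : M.maxRankOn q l % 2 = (b + 1) % 2)
    (hlt : M.maxRankOn q (lam b) < M.maxRankOn q l) :
    M.IsFlower q (Function.update lam (b + 1) l) a (b + 1) := by
  constructor
  · intro j h1 h2
    rcases h2.lt_or_eq with h2 | rfl
    · rw [Function.update_of_ne (by omega)]
      exact h.1 j h1 (by omega)
    · rw [Function.update_self]
      exact ⟨hl, hpar⟩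
  · intro j h1 h2
    rw [Function.update_of_ne (by omega)]
    rcases (Nat.lt_succ_iff.1 h2).lt_or_eq with h2 | rfl
    · rw [Function.update_of_ne (by omega)]
      exact h.2 j h1 h2
    · rw [Function.update_self]
      exact hlt

lemma IsFlower.maxRankOn_add_le {q : Q} {lam : ℕ → List Alpha} {a b j : ℕ}
    (h : M.IsFlower q lam a b) (haj : a ≤ j) (hjb : j ≤ b) :
    M.maxRankOn q (lam a) + (j - a) ≤ M.maxRankOn q (lam j) := by
  induction j, haj using Nat.le_induction with
  | base => simp
  | succ j haj ih =>
    have := h.2 j haj (by omega)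
    have := ih (by omega)
    omega

lemma HasFlower.exists_rank_add_le {a b : ℕ} (h : M.HasFlower a b) (hab : a ≤ b) :
    ∃ x y, M.rank x % 2 = a % 2 ∧ M.rank x + (b - a) ≤ M.rank y := by
  obtain ⟨q, lam, hfl⟩ : ∃ q lam, M.IsFlower q lam a b := h
  obtain ⟨x, -, hx⟩ := M.exists_rank_eq_maxRankOn q (lam a)
  obtain ⟨y, -, hy⟩ := M.exists_rank_eq_maxRankOn q (lam b)
  refine ⟨x, y, hx ▸ (hfl.1 a le_rfl hab).2, ?_⟩
  rw [hx, hy]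
  exact hfl.maxRankOn_add_le hab le_rfl

end Flowers

section FlowerTransfer

variable [Finite Q'] {M : DPWA Alpha Q} {B : DPWA Alpha Q'}

lemma even_maxRankOn_iff_of_lang_eq [Finite Q] (hlang : B.Lang = M.Lang) {x l : List Alpha} {p : Q'}
    {q : Q} (hp : B.follow B.init x = p) (hq : M.follow M.init x = q) (hBl : B.IsLoop p l)
    (hMl : M.IsLoop q l) : Even (B.maxRankOn p l) ↔ Even (M.maxRankOn q l) := by
  rw [← B.mem_lang_append_cycle_iff hp hBl, ← M.mem_lang_append_cycle_iff hq hMl, hlang]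

variable (B) in
lemma IsLoop.exists_idempotent_power {q : Q} {l : List Alpha} (hl : M.IsLoop q l) :
    ∃ W, M.IsLoop q W ∧ M.maxRankOn q W = M.maxRankOn q l ∧
      (∀ y, B.follow (B.follow y W) W = B.follow y W) ∧ ∀ y, ∃ z, B.follow y W = B.follow z l := by
  obtain ⟨e, he, hidem⟩ := Function.exists_iterate_idempotent (B.follow · l)
  refine ⟨_, hl.flatten_replicate he, M.maxRankOn_flatten_replicate hl.2 he, fun y => ?_,
    fun y => ?_⟩
  · simp only [follow_flatten_replicate]
    exact hidem y
  · obtain ⟨e, rfl⟩ := Nat.exists_eq_succ_of_ne_zero he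
    exact ⟨_, by rw [follow_flatten_replicate, Function.iterate_succ_apply']⟩

variable [Finite Q]

variable (B) in
/-- Pumping the petals in `B`: each state that `B` reaches by reading `W` lies on a `B`-loop `V`
that behaves in `M` like petal `l`, simultaneously for all `l ≤ j`. -/
lemma IsFlower.exists_petals_fixed {q : Q} {lam : ℕ → List Alpha} {a b j : ℕ}
    (hfl : M.IsFlower q lam a b) (haj : a ≤ j) (hjb : j ≤ b) :
    ∃ W, M.IsLoop q W ∧ M.maxRankOn q W = M.maxRankOn q (lam j) ∧
      ∀ l, a ≤ l → l ≤ j → ∃ V, M.IsLoop q V ∧ M.maxRankOn q V = M.maxRankOn q (lam l) ∧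
        ∀ y, B.follow (B.follow y W) V = B.follow y W := by
  induction j, haj using Nat.le_induction with
  | base =>
    obtain ⟨W, hW, hWrank, hidem, -⟩ := (hfl.1 a le_rfl hjb).1.exists_idempotent_power B
    refine ⟨W, hW, hWrank, fun l h1 h2 => ?_⟩
    obtain rfl : l = a := by omega
    exact ⟨W, hW, hWrank, hidem⟩
  | succ j haj ih =>
    obtain ⟨W, hW, hWrank, hfix⟩ := ih (by omega)
    have hpetal := (hfl.1 (j + 1) (by omega) hjb).1
    have hs : M.IsLoop q (W ++ lam (j + 1) ++ W) := (hW.append hpetal).append hW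
    have hsrank : M.maxRankOn q (W ++ lam (j + 1) ++ W) = M.maxRankOn q (lam (j + 1)) := by
      have := hfl.2 j haj (by omega)
      simp only [maxRankOn_append, follow_append, hW.2, hpetal.2, hWrank]
      omega
    obtain ⟨W', hW', hW'rank, hidem, hends⟩ := hs.exists_idempotent_power B
    refine ⟨W', hW', hW'rank.trans hsrank, fun l h1 h2 => ?_⟩
    rcases h2.lt_or_eq with h2 | rfl
    · obtain ⟨V, hV, hVrank, hVfix⟩ := hfix l h1 (by omega)
      refine ⟨V, hV, hVrank, fun y => ?_⟩
      obtain ⟨z, hz⟩ := hends y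
      rw [hz, follow_append, hVfix]
    · exact ⟨W', hW', hW'rank.trans hsrank, hidem⟩

theorem HasFlower.of_lang_eq (hlang : B.Lang = M.Lang) (hreach : ∀ q, M.Reachable q) {a b : ℕ}
    (h : M.HasFlower a b) (hab : a ≤ b) : B.HasFlower a b := by
  obtain ⟨q, lam, hfl⟩ : ∃ q lam, M.IsFlower q lam a b := h
  obtain ⟨u, hu⟩ := hreach q
  obtain ⟨W, hW, -, hpetals⟩ := hfl.exists_petals_fixed B hab le_rfl
  choose! V hV hVrank hVfix using hpetals
  set p := B.follow (B.follow B.init u) W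
  have hq : M.follow M.init (u ++ W) = q := by rw [follow_append, hu, hW.2]
  have hBloop : ∀ l, a ≤ l → l ≤ b → B.IsLoop p (V l) :=
    fun l h1 h2 => ⟨(hV l h1 h2).1, hVfix l h1 h2 _⟩
  have heven : ∀ L, B.IsLoop p L → M.IsLoop q L →
      (Even (B.maxRankOn p L) ↔ Even (M.maxRankOn q L)) :=
    fun L hB hM => even_maxRankOn_iff_of_lang_eq hlang (follow_append _ _ _ _) hq hB hM
  have hpar : ∀ l, a ≤ l → l ≤ b → B.maxRankOn p (V l) % 2 = l % 2 := by
    intro l h1 h2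
    have h := heven _ (hBloop l h1 h2) (hV l h1 h2)
    rw [hVrank l h1 h2, Nat.even_iff, Nat.even_iff] at h
    have := (hfl.1 l h1 h2).2
    omega
  refine ⟨p, V, fun l h1 h2 => ⟨hBloop l h1 h2, hpar l h1 h2⟩, fun l h1 h2 => ?_⟩
  -- `V l ++ V (l + 1)` has the parity of petal `l + 1` in `M`, hence in `B`
  have h := heven _ ((hBloop l h1 h2.le).append (hBloop (l + 1) (by omega) h2))
    ((hV l h1 h2.le).append (hV (l + 1) (by omega) h2))
  rw [maxRankOn_append, maxRankOn_append, (hBloop l h1 h2.le).2, (hV l h1 h2.le).2,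
    hVrank l h1 h2.le, hVrank (l + 1) (by omega) h2, max_eq_right (hfl.2 l h1 h2).le,
    Nat.even_iff, Nat.even_iff] at h
  have := hpar l h1 h2.le
  have := hpar (l + 1) (by omega) h2
  have := (hfl.1 (l + 1) (by omega) h2).2
  omega

end FlowerTransfer

section Rerank

variable {M : DPWA Alpha Q} {i : ℕ}

variable (M) in
def withRank (rk : Q → ℕ) : DPWA Alpha Q := { M with rank := rk }

lemma run_withRank (rk : Q → ℕ) : (M.withRank rk).run = M.run := by
  funext w n
  induction n with
  | zero => rfl
  | succ n ih => simp only [run, ih]; rfl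

lemma lang_withRank_eq [Finite Q] {rk : Q → ℕ}
    (h : ∀ S, M.IsLoopSet S → (M.withRank rk).supRank S % 2 = M.supRank S % 2) :
    (M.withRank rk).Lang = M.Lang := by
  ext w
  rw [mem_lang_iff, mem_lang_iff, run_withRank, Nat.even_iff, Nat.even_iff,
    h _ (M.isLoopSet_infOften_run w)]

variable (M) in
/-- `M.Tower i S n` records a chain `S₀ ⊆ S₁ ⊆ ⋯ ⊆ Sₘ = S` of loop sets whose maximal ranks
increase with alternating parity; `n` is `m` plus the least number `≥ i` with the parity of the
maximal rank on `S₀`. -/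
inductive Tower (i : ℕ) : Set Q → ℕ → Prop
  | base {S : Set Q} : M.IsLoopSet S → Tower i S (i + (M.supRank S + i) % 2)
  | step {S T : Set Q} {n : ℕ} : Tower i T n → M.IsLoopSet S → T ⊆ S →
      M.supRank T < M.supRank S → (M.supRank T + 1) % 2 = M.supRank S % 2 → Tower i S (n + 1)

lemma Tower.mod_two {S : Set Q} {n : ℕ} (h : M.Tower i S n) : n % 2 = M.supRank S % 2 := by
  induction h <;> omega

lemma Tower.isLoopSet {S : Set Q} {n : ℕ} (h : M.Tower i S n) : M.IsLoopSet S := by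
  cases h <;> assumption

lemma Tower.exists_isFlower {S : Set Q} {n : ℕ} (h : M.Tower i S n) :
    ∃ q ∈ S, ∃ c lam, c ≤ i + 1 ∧ M.IsFlower q lam c n ∧ M.maxRankOn q (lam n) = M.supRank S := by
  induction h with
  | base hS =>
    obtain ⟨q, l, hl, rfl⟩ := hS
    refine ⟨q, M.self_mem_visited q l, i + (M.supRank (M.visited q l) + i) % 2, fun _ => l,
      by omega, ⟨fun j h1 h2 => ⟨hl, ?_⟩, fun j h1 h2 => by omega⟩, M.maxRankOn_eq_supRank q l⟩
    rw [show M.maxRankOn q l = _ from M.maxRankOn_eq_supRank q l]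
    omega
  | @step S T n hT hS hTS hlt hpar ih =>
    obtain ⟨q, hq, c, lam, hc, hfl, hrank⟩ := ih
    obtain ⟨l, hl, hlS⟩ := hS.exists_isLoop (hTS hq)
    have hlrank : M.maxRankOn q l = M.supRank S := by rw [maxRankOn_eq_supRank, hlS]
    have hmod := hT.mod_two
    refine ⟨q, hTS hq, c, _, hc, hfl.update_succ hl (by omega) (by omega), ?_⟩
    rw [Function.update_self, hlrank]

lemma Tower.le_of_not_hasFlower {S : Set Q} {n k a b : ℕ} (h : M.Tower i S n) (hik : i ≤ k)
    (hF : ¬ M.HasFlower a b) (hpar : a % 2 = (i + 1) % 2) (hb : b ≤ a + (k - i)) : n ≤ k := by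
  by_contra hn
  obtain ⟨q, -, c, lam, hc, hfl, -⟩ := h.exists_isFlower
  have hflower : M.HasFlower (i + 1) (k + 1) :=
    (show M.HasFlower c n from ⟨q, lam, hfl⟩).mono hc (by omega)
  exact hF ((hflower.shift (by omega) hpar.symm).mono le_rfl (by omega))

variable (M) in
def towerValues (i : ℕ) (q : Q) : Set ℕ :=
  {n | n = i ∨ ∃ S, q ∈ S ∧ M.supRank S = M.rank q ∧ M.Tower i S n}

variable (M) in
/-- The new rank of `q`: the largest value of a tower on whose top `q` has maximal rank, or `i`. -/
noncomputable def towerRank (i : ℕ) (q : Q) : ℕ := sSup (M.towerValues i q)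

lemma towerRank_mem {q : Q} (hbdd : BddAbove (M.towerValues i q)) :
    M.towerRank i q ∈ M.towerValues i q :=
  Nat.sSup_mem ⟨i, Or.inl rfl⟩ hbdd

lemma le_towerRank {q : Q} {n : ℕ} (hbdd : BddAbove (M.towerValues i q))
    (hn : n ∈ M.towerValues i q) : n ≤ M.towerRank i q :=
  le_csSup hbdd hn

lemma IsLoopSet.supRank_towerRank_mod_two [Finite Q] (hbdd : ∀ q, BddAbove (M.towerValues i q))
    {S : Set Q} (hS : M.IsLoopSet S) :
    (M.withRank (M.towerRank i)).supRank S % 2 = M.supRank S % 2 := by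
  set B := M.withRank (M.towerRank i)
  obtain ⟨qs, hqsS, hqs⟩ := B.exists_rank_eq_supRank hS.nonempty
  obtain ⟨qm, hqmS, hqm⟩ := M.exists_rank_eq_supRank hS.nonempty
  change M.towerRank i qs = B.supRank S at hqs
  have hle : ∀ n ∈ M.towerValues i qm, n ≤ B.supRank S := fun n hn =>
    (le_towerRank (hbdd qm) hn).trans (B.rank_le_supRank hqmS)
  have hbase := hle _ (Or.inr ⟨S, hqmS, hqm.symm, .base hS⟩)
  rcases towerRank_mem (hbdd qs) with hdef | ⟨T, hqsT, hT, htower⟩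
  · omega
  · have hmod := htower.mod_two
    by_contra hpar
    -- a wrong parity at `qs` would let the tower at `T` grow by `T ∪ S`, beyond the value at `qm`
    have hlt : M.supRank T < M.supRank S :=
      lt_of_le_of_ne (hT ▸ M.rank_le_supRank hqsS) (by omega)
    have hU := htower.isLoopSet.union hS hqsT hqsS
    have hUsup : M.supRank (T ∪ S) = M.supRank S := by
      rw [M.supRank_union htower.isLoopSet.nonempty hS.nonempty]
      omega
    have := hle _ (Or.inr ⟨T ∪ S, Or.inr hqmS, hUsup.trans hqm.symm,
      .step htower hU Set.subset_union_left (hUsup ▸ hlt) (by omega)⟩)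
    omega

theorem exists_withRank_lang_eq [Finite Q] {k : ℕ} (hik : i ≤ k)
    (hbound : ∀ S n, M.Tower i S n → n ≤ k) :
    ∃ rk : Q → ℕ, (∀ q, i ≤ rk q ∧ rk q ≤ k) ∧ (M.withRank rk).Lang = M.Lang := by
  have hupper : ∀ q, k ∈ upperBounds (M.towerValues i q) := fun q n hn =>
    hn.elim (fun h => h ▸ hik) fun ⟨S, _, _, hS⟩ => hbound S n hS
  refine ⟨M.towerRank i, fun q => ⟨le_csSup ⟨k, hupper q⟩ (Or.inl rfl),
    csSup_le ⟨i, Or.inl rfl⟩ (hupper q)⟩,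
    lang_withRank_eq fun S hS => hS.supRank_towerRank_mod_two fun q => ⟨k, hupper q⟩⟩

end Rerank

end DPWA

theorem deterministic_word_index_general {Alpha Q : Type} [Fintype Q]
    (M : DPWA Alpha Q) (hreach : ∀ q, M.Reachable q) (i k : ℕ) (hi : i ≤ 1) (hik : i ≤ k) :
    (∃ (Q' : Type) (_ : Fintype Q') (B : DPWA Alpha Q'),
        (∀ q : Q', i ≤ B.rank q ∧ B.rank q ≤ k) ∧ B.Lang = M.Lang) ↔
      ¬ M.HasFlower (if i = 0 then 1 else 0) (if i = 0 then k + 1 else k - 1) := by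
  constructor
  · rintro ⟨Q', _, B, hB, hlang⟩ hflower
    obtain ⟨x, y, hpar, hxy⟩ := (hflower.of_lang_eq hlang hreach (by split_ifs <;> omega))
      |>.exists_rank_add_le (by split_ifs <;> omega)
    have := hB x
    have := hB y
    split_ifs at hpar hxy <;> omega
  · intro hnone
    obtain ⟨rk, hrk, hlang⟩ := M.exists_withRank_lang_eq hik fun S n h =>
      h.le_of_not_hasFlower hik hnone (by split_ifs <;> omega) (by split_ifs <;> omega)
    exact ⟨Q, inferInstance, M.withRank rk, hrk, hlang⟩

/-- Niwiński–Walukiewicz index theorem for deterministic word automata.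
A deterministic parity word automaton with all states reachable is equivalent to a
deterministic `(i,k)`-automaton iff it contains no dual `(i,k)‾`-flower. -/
theorem deterministic_word_index {Alpha Q : Type} [Fintype Alpha] [Nonempty Alpha] [Fintype Q]
    (M : DPWA Alpha Q) (hreach : ∀ q, M.Reachable q) (i k : ℕ) (hi : i ≤ 1) (hik : i ≤ k) :
    (∃ (Q' : Type) (_ : Fintype Q') (B : DPWA Alpha Q'),
        (∀ q : Q', i ≤ B.rank q ∧ B.rank q ≤ k) ∧ B.Lang = M.Lang) ↔
      ¬ M.HasFlower (if i = 0 then 1 else 0) (if i = 0 then k + 1 else k - 1) :=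
  deterministic_word_index_general M hreach i k hi hik
end

section
/- Let ι, ι' ∈ {0,1}, κ ≥ ι, κ' ≥ ι'. Then L_{(ι,κ)} ≤_W L_{(ι',κ')} if and only if κ − ι < κ' − ι' or (ι,κ) = (ι',κ'). -/
/-!
Relabelling letters by a monotone map commutes with taking the largest letter that recurs, so
shifting the alphabet by an even amount reduces `L_{(ι,κ)}` to every parity language of larger
range, while shifting by one exchanges `L_{(0,d)}` with the complement of `L_{(1,d+1)}`.

Conversely no `L_{(ι,κ)}` reduces to its complement: against a continuous `φ` one builds a word
`w` that copies each letter of `φ w` as soon as a finite prefix of `w` determines it, writing the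
least letter `ι` in between; then `w` and `φ w` have the same largest recurring letter. Since
`L_{(0,d)}` and `L_{(1,d+1)}` are dual to each other, a reduction between them, or from a language
of larger range into one of them, would make one of them self-dual.
-/

open Filter

open Topology PiNat

/-- For unbounded `u` this `sSup` is a junk value. -/
noncomputable def maxInfOften (u : ℕ → ℕ) : ℕ :=
  sSup {r | ∃ᶠ n in atTop, u n = r}

section MaxInfOften

variable {u : ℕ → ℕ} {K : ℕ}

theorem bddAbove_frequently_eq (hu : ∀ n, u n ≤ K) :
    BddAbove {r | ∃ᶠ n in atTop, u n = r} :=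
  ⟨K, fun _ (hr : ∃ᶠ n in atTop, u n = _) => hr.exists.elim fun n hn => hn ▸ hu n⟩

theorem frequently_eq_maxInfOften (hu : ∀ n, u n ≤ K) :
    ∃ᶠ n in atTop, u n = maxInfOften u := by
  have hne : ∃ r, ∃ᶠ n in atTop, u n = r := by
    by_contra! h
    have hfin : ∀ᶠ n in atTop, ∀ r ∈ Set.Iic K, u n ≠ r :=
      (eventually_all_finite (Set.finite_Iic K)).2 fun r _ => h r
    obtain ⟨n, hn⟩ := hfin.exists
    exact hn (u n) (hu n) rfl
  exact Nat.sSup_mem hne (bddAbove_frequently_eq hu)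

theorem le_maxInfOften (hu : ∀ n, u n ≤ K) {r : ℕ} (hr : ∃ᶠ n in atTop, u n = r) :
    r ≤ maxInfOften u :=
  le_csSup (bddAbove_frequently_eq hu) hr

theorem le_maxInfOften_of_forall_le (hu : ∀ n, u n ≤ K) {b : ℕ} (hb : ∀ n, b ≤ u n) :
    b ≤ maxInfOften u :=
  (frequently_eq_maxInfOften hu).exists.elim fun n hn => hn ▸ hb n

theorem eventually_le_maxInfOften (hu : ∀ n, u n ≤ K) :
    ∀ᶠ n in atTop, u n ≤ maxInfOften u := by
  have hrare : ∀ᶠ n in atTop, ∀ r ∈ Set.Ioc (maxInfOften u) K, u n ≠ r :=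
    (eventually_all_finite (Set.finite_Ioc _ _)).2 fun r hr =>
      not_frequently.1 fun hfreq => (le_maxInfOften hu hfreq).not_gt hr.1
  filter_upwards [hrare] with n hn
  by_contra! hlt
  exact hn (u n) ⟨hlt, hu n⟩ rfl

theorem maxInfOften_le_of_eventually_le (hu : ∀ n, u n ≤ K) {b : ℕ}
    (hb : ∀ᶠ n in atTop, u n ≤ b) : maxInfOften u ≤ b :=
  ((frequently_eq_maxInfOften hu).and_eventually hb).exists.elim fun _ ⟨hn, hb⟩ => hn ▸ hb

theorem maxInfOften_comp_of_monotone {g : ℕ → ℕ} (hg : Monotone g) (hu : ∀ n, u n ≤ K) :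
    maxInfOften (fun n => g (u n)) = g (maxInfOften u) := by
  have hgu : ∀ n, g (u n) ≤ g K := fun n => hg (hu n)
  refine le_antisymm (maxInfOften_le_of_eventually_le hgu ?_) (le_maxInfOften hgu ?_)
  · exact (eventually_le_maxInfOften hu).mono fun n hn => hg hn
  · exact (frequently_eq_maxInfOften hu).mono fun n hn => by rw [hn]

theorem maxInfOften_eq_of_interleave {v : ℕ → ℕ} {s : ℕ → ℕ} {p : ℕ} (hs : StrictMono s)
    (hcopy : ∀ m, v (s m) = u m) (hpad : ∀ n ∉ Set.range s, v n = p) (hp : ∀ m, p ≤ u m)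
    (hu : ∀ m, u m ≤ K) : maxInfOften v = maxInfOften u := by
  have hpmax : p ≤ maxInfOften u := le_maxInfOften_of_forall_le hu hp
  have hv : ∀ n, v n ≤ K := by
    intro n
    by_cases hn : n ∈ Set.range s
    · obtain ⟨m, rfl⟩ := hn
      exact hcopy m ▸ hu m
    · exact hpad n hn ▸ (hp 0).trans (hu 0)
  refine le_antisymm (maxInfOften_le_of_eventually_le hv ?_) (le_maxInfOften hv ?_)
  · obtain ⟨M, hM⟩ := eventually_atTop.1 (eventually_le_maxInfOften hu)
    refine eventually_atTop.2 ⟨s M, fun n hn => ?_⟩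
    by_cases hrange : n ∈ Set.range s
    · obtain ⟨m, rfl⟩ := hrange
      exact hcopy m ▸ hM m (hs.le_iff_le.1 hn)
    · exact hpad n hrange ▸ hpmax
  · exact hs.tendsto_atTop.frequently
      ((frequently_eq_maxInfOften hu).mono fun m hm => (hcopy m).trans hm)

end MaxInfOften

theorem Continuous.exists_cylinder_eq {E B : Type*} [TopologicalSpace E] [DiscreteTopology E]
    [TopologicalSpace B] [DiscreteTopology B] {f : (ℕ → E) → B} (hf : Continuous f)
    (x : ℕ → E) : ∃ N, ∀ y ∈ cylinder x N, f y = f x := by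
  have hnhds : f ⁻¹' {f x} ∈ 𝓝 x := hf.continuousAt ((isOpen_discrete _).mem_nhds rfl)
  obtain ⟨_, ⟨z, N, rfl⟩, hx, hsub⟩ :=
    (isTopologicalBasis_cylinders fun _ => E).mem_nhds_iff.1 hnhds
  exact ⟨N, fun y hy => hsub (mem_cylinder_iff_eq.1 hx ▸ hy)⟩

namespace InterleaveCopy

variable {A : Type*} (pad : A) (φ : (ℕ → A) → ℕ → A)

def Forces (u : List A) (m : ℕ) (a : A) : Prop :=
  ∀ x : ℕ → A, (∀ j (hj : j < u.length), x j = u[j]) → φ x m = a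

def Forced (p : List A × ℕ) : Prop :=
  ∃ a, Forces φ p.1 p.2 a

open Classical in
noncomputable def nextLetter (p : List A × ℕ) : A :=
  if h : Forced φ p then h.choose else pad

open Classical in
/-- Stage `n` is the prefix of length `n` built so far, together with the number of output
letters of `φ` copied into it: the next letter copies the first uncopied output letter if the
prefix already forces it, and is `pad` otherwise. -/
noncomputable def stage : ℕ → List A × ℕ
  | 0 => ([], 0)
  | n + 1 => ((stage n).1 ++ [nextLetter pad φ (stage n)],
      if Forced φ (stage n) then (stage n).2 + 1 else (stage n).2)

noncomputable def word (n : ℕ) : A :=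
  nextLetter pad φ (stage pad φ n)

theorem stage_fst (n : ℕ) : (stage pad φ n).1 = (List.range n).map (word pad φ) := by
  induction n with
  | zero => rfl
  | succ n ih => simp [stage, ih, List.range_succ, word]

open Classical in
theorem stage_snd (n : ℕ) :
    (stage pad φ n).2 = Nat.count (fun j => Forced φ (stage pad φ j)) n := by
  induction n with
  | zero => rfl
  | succ n ih => simp only [stage, Nat.count_succ, ← ih]; split_ifs <;> rfl

theorem forces_iff_cylinder {n m : ℕ} {a : A} :
    Forces φ (stage pad φ n).1 m a ↔ ∀ x ∈ cylinder (word pad φ) n, φ x m = a := by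
  simp [Forces, stage_fst, mem_cylinder_iff]

theorem apply_stage_snd_eq_word {n : ℕ} (h : Forced φ (stage pad φ n)) :
    φ (word pad φ) (stage pad φ n).2 = word pad φ n := by
  have hword : word pad φ n = h.choose := dif_pos h
  rw [hword]
  exact (forces_iff_cylinder pad φ).1 h.choose_spec _ (self_mem_cylinder _ _)

theorem word_eq_pad {n : ℕ} (h : ¬Forced φ (stage pad φ n)) : word pad φ n = pad :=
  dif_neg h

open Classical in
theorem infinite_forced [TopologicalSpace A] [DiscreteTopology A] (hφ : Continuous φ) :
    {n | Forced φ (stage pad φ n)}.Infinite := by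
  intro hfin
  obtain ⟨n₀, hn₀⟩ := hfin.bddAbove
  set C := Nat.count (fun j => Forced φ (stage pad φ j)) (n₀ + 1)
  obtain ⟨N, hN⟩ :=
    (show Continuous fun x => φ x C from (continuous_apply C).comp hφ).exists_cylinder_eq
      (word pad φ)
  -- past `n₀` the counter is stuck at `C`, yet output letter `C` is fixed by a finite prefix
  have hcount : (stage pad φ (n₀ + 1 + N)).2 = C := by
    have hnone : Nat.count (fun k => Forced φ (stage pad φ (n₀ + 1 + k))) N = 0 :=
      Nat.count_iff_forall_not.2 fun m _ hm => by have := hn₀ hm; omega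
    rw [stage_snd, Nat.count_add, hnone, add_zero]
  have hforced : Forced φ (stage pad φ (n₀ + 1 + N)) := by
    refine ⟨φ (word pad φ) C, ?_⟩
    rw [hcount, forces_iff_cylinder]
    exact fun x hx => hN x (cylinder_anti _ (by omega) hx)
  have := hn₀ hforced
  omega

end InterleaveCopy

open InterleaveCopy in
theorem Continuous.exists_interleave_copy {A : Type*} [TopologicalSpace A] [DiscreteTopology A]
    (pad : A) {φ : (ℕ → A) → ℕ → A} (hφ : Continuous φ) :
    ∃ (w : ℕ → A) (s : ℕ → ℕ), StrictMono s ∧ (∀ m, w (s m) = φ w m) ∧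
      ∀ n ∉ Set.range s, w n = pad := by
  classical
  have hinf := infinite_forced pad φ hφ
  refine ⟨word pad φ, Nat.nth fun n => Forced φ (stage pad φ n), Nat.nth_strictMono hinf,
    fun m => ?_, fun n hn => word_eq_pad pad φ ?_⟩
  · have hforced := Nat.nth_mem_of_infinite hinf m
    rw [← apply_stage_snd_eq_word pad φ hforced, stage_snd, Nat.count_nth_of_infinite hinf]
  · rwa [Nat.range_nth_of_infinite hinf] at hn

section Wadge

variable {X Y Z : Type} [TopologicalSpace X] [TopologicalSpace Y] [TopologicalSpace Z]

theorem WadgeLE.refl (S : Set X) : WadgeLE S S :=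
  ⟨id, continuous_id, rfl⟩

theorem WadgeLE.trans {S : Set X} {T : Set Y} {U : Set Z} (hST : WadgeLE S T)
    (hTU : WadgeLE T U) : WadgeLE S U := by
  obtain ⟨φ, hφ, rfl⟩ := hST
  obtain ⟨ψ, hψ, rfl⟩ := hTU
  exact ⟨ψ ∘ φ, hψ.comp hφ, rfl⟩

theorem WadgeLE.compl {S : Set X} {T : Set Y} (h : WadgeLE S T) : WadgeLE Sᶜ Tᶜ := by
  obtain ⟨φ, hφ, rfl⟩ := h
  exact ⟨φ, hφ, rfl⟩

end Wadge

section ParityLanguages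

variable {i k i' k' : ℕ}

theorem mem_Lidx {w : ℕ → IdxAlpha i k} : w ∈ Lidx i k ↔ Even (maxInfOften fun n => (w n).1) :=
  Iff.rfl

/-- Relabelling letters by a monotone `g` turns the largest recurring letter `m` into `g m`. -/
theorem wadgeLE_Lidx_of_monotone {g : ℕ → ℕ} (hg : Monotone g)
    (hrange : ∀ a, i ≤ a → a ≤ k → i' ≤ g a ∧ g a ≤ k') {S : Set (ℕ → IdxAlpha i k)}
    (hS : ∀ w : ℕ → IdxAlpha i k, w ∈ S ↔ Even (g (maxInfOften fun n => (w n).1))) :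
    WadgeLE S (Lidx i' k') := by
  let f : IdxAlpha i k → IdxAlpha i' k' := fun a => ⟨g a.1, hrange _ a.2.1 a.2.2⟩
  refine ⟨fun w => f ∘ w,
    continuous_pi fun n => continuous_of_discreteTopology.comp (continuous_apply n), ?_⟩
  ext w
  rw [hS, ← maxInfOften_comp_of_monotone hg fun n => (w n).2.2]
  rfl

theorem wadgeLE_Lidx_of_sub_lt (hi : i ≤ 1) (hi' : i' ≤ 1) (h : k - i < k' - i') :
    WadgeLE (Lidx i k) (Lidx i' k') := by
  obtain ⟨c, hc, hrange⟩ : ∃ c, Even c ∧ ∀ a, i ≤ a → a ≤ k → i' ≤ a + c ∧ a + c ≤ k' := by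
    by_cases hii' : i' ≤ i
    · exact ⟨0, by decide, by omega⟩
    · exact ⟨2, by decide, by omega⟩
  refine wadgeLE_Lidx_of_monotone (g := (· + c)) (fun _ _ h => Nat.add_le_add_right h c)
    hrange fun w => ?_
  simp [mem_Lidx, Nat.even_add, hc]

theorem compl_Lidx_zero_wadgeLE (d : ℕ) : WadgeLE (Lidx 0 d)ᶜ (Lidx 1 (d + 1)) :=
  wadgeLE_Lidx_of_monotone (g := (· + 1)) (fun _ _ h => Nat.add_le_add_right h 1) (by omega)
    fun w => by simp [mem_Lidx, Nat.even_add_one]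

theorem compl_Lidx_one_wadgeLE (d : ℕ) : WadgeLE (Lidx 1 (d + 1))ᶜ (Lidx 0 d) := by
  refine wadgeLE_Lidx_of_monotone (g := (· - 1)) (fun _ _ h => Nat.sub_le_sub_right h 1)
    (by omega) fun w => ?_
  have hpos : 1 ≤ maxInfOften fun n => (w n).1 :=
    le_maxInfOften_of_forall_le (fun n => (w n).2.2) fun n => (w n).2.1
  simp [mem_Lidx, Nat.even_sub hpos]

theorem Lidx_not_wadgeLE_compl (hik : i ≤ k) : ¬WadgeLE (Lidx i k) (Lidx i k)ᶜ := by
  rintro ⟨φ, hφ, hred⟩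
  obtain ⟨w, s, hs, hcopy, hpad⟩ :=
    hφ.exists_interleave_copy (A := IdxAlpha i k) ⟨i, le_rfl, hik⟩
  have hmax : (maxInfOften fun n => (w n).1) = maxInfOften fun n => (φ w n).1 :=
    maxInfOften_eq_of_interleave hs (fun m => by rw [hcopy]) (fun n hn => by rw [hpad n hn])
      (fun m => (φ w m).2.1) fun m => (φ w m).2.2
  have hw : w ∈ Lidx i k ↔ w ∉ Lidx i k := by
    conv_lhs => rw [hred]
    rw [Set.mem_preimage, Set.mem_compl_iff, mem_Lidx, mem_Lidx, hmax]
  exact iff_not_self hw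

theorem not_wadgeLE_Lidx_one_zero (d : ℕ) : ¬WadgeLE (Lidx 1 (d + 1)) (Lidx 0 d) := fun h =>
  have hdual : WadgeLE (Lidx 0 d) (Lidx 1 (d + 1))ᶜ := by
    simpa using (compl_Lidx_zero_wadgeLE d).compl
  Lidx_not_wadgeLE_compl (Nat.zero_le d) (hdual.trans h.compl)

theorem not_wadgeLE_Lidx_zero_one (d : ℕ) : ¬WadgeLE (Lidx 0 d) (Lidx 1 (d + 1)) := fun h =>
  Lidx_not_wadgeLE_compl (Nat.zero_le d)
    (h.trans (by simpa using (compl_Lidx_one_wadgeLE d).compl))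

/-- `(1 - i', k' + 1 - 2 i')` is the other index pair with difference `k' - i'`. -/
theorem not_wadgeLE_Lidx_flip (hi' : i' ≤ 1) (hik' : i' ≤ k') :
    ¬WadgeLE (Lidx (1 - i') (k' + 1 - 2 * i')) (Lidx i' k') := by
  interval_cases i'
  · exact not_wadgeLE_Lidx_one_zero k'
  · obtain ⟨d, rfl⟩ : ∃ d, k' = d + 1 := ⟨k' - 1, by omega⟩
    exact not_wadgeLE_Lidx_zero_one d

end ParityLanguages

/-- `L_{(i,k)} ≤_W L_{(i',k')}` iff `k - i < k' - i'` or the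
indices are equal. -/
theorem parity_languages_order (i k i' k' : ℕ)
    (hi : i ≤ 1) (hik : i ≤ k) (hi' : i' ≤ 1) (hik' : i' ≤ k') :
    WadgeLE (Lidx i k) (Lidx i' k') ↔ (k - i < k' - i' ∨ (i = i' ∧ k = k')) := by
  constructor
  · intro h
    by_contra! hne
    refine not_wadgeLE_Lidx_flip hi' hik' (WadgeLE.trans ?_ h)
    rcases hne.1.lt_or_eq with hlt | heq
    · exact wadgeLE_Lidx_of_sub_lt (by omega) hi (by omega)
    · obtain ⟨rfl, rfl⟩ : i = 1 - i' ∧ k = k' + 1 - 2 * i' := by omega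
      exact WadgeLE.refl _
  · rintro (hlt | ⟨rfl, rfl⟩)
    · exact wadgeLE_Lidx_of_sub_lt hi hi' hlt
    · exact WadgeLE.refl _
end

section
/- Let A be a normalized deterministic parity tree automaton over a finite nonempty alphabet Σ. Then L(A) is an open subset of T_Σ if and only if A contains no weak (0,1)-flower. -/
open Filter

/-- A deterministic parity tree automaton over alphabet `Alpha` with state set `Q`. -/
structure DPTA (Alpha : Type) (Q : Type) where
  init : Q
  delta : Q → Alpha → Q × Q
  rank : Q → ℕ

namespace DPTA

variable {Alpha Q : Type}

/-- The state reached in one step from `q` reading letter `s` in direction `d`. -/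
def next (M : DPTA Alpha Q) (q : Q) (s : Alpha) (d : Bool) : Q :=
  if d then (M.delta q s).2 else (M.delta q s).1

/-- The state of the run started in `q` on the tree `t` at the node `v`
(nodes are words over `{0,1}`, head = first direction from the root). -/
def runFrom (M : DPTA Alpha Q) : Q → (List Bool → Alpha) → List Bool → Q
  | q, _, [] => q
  | q, t, d :: v => runFrom M (M.next q (t []) d) (fun u => t (d :: u)) v

/-- The state of the (unique) run of `M` on `t` at node `v`. -/
def run (M : DPTA Alpha Q) (t : List Bool → Alpha) (v : List Bool) : Q :=
  runFrom M M.init t v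

/-- Parity acceptance: the largest value occurring infinitely often is even. -/
def ParityAccept (f : ℕ → ℕ) : Prop :=
  Even (sSup {r : ℕ | ∃ᶠ n in atTop, f n = r})

/-- The prefix of length `n` of an infinite path. -/
def pref (π : ℕ → Bool) (n : ℕ) : List Bool :=
  List.ofFn fun i : Fin n => π i

/-- The run of `M` on `t` started at state `q` is accepting. -/
def AcceptsFrom (M : DPTA Alpha Q) (q : Q) (t : List Bool → Alpha) : Prop :=
  ∀ π : ℕ → Bool, ParityAccept fun n => M.rank (runFrom M q t (pref π n))

/-- The language recognised by `M`: trees with accepting run. -/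
def Lang (M : DPTA Alpha Q) : Set (List Bool → Alpha) :=
  {t | M.AcceptsFrom M.init t}

/-- The state reached from `q` following a finite sequence of steps
(steps = letter together with direction). -/
def follow (M : DPTA Alpha Q) (q : Q) (steps : List (Alpha × Bool)) : Q :=
  steps.foldl (fun p s => M.next p s.1 s.2) q

/-- All states visited along a path (the starting state included). -/
def statesOn (M : DPTA Alpha Q) (q : Q) (steps : List (Alpha × Bool)) : List Q :=
  List.scanl (fun p s => M.next p s.1 s.2) q steps

/-- The largest rank of a state visited along a path. -/
def maxRankOn (M : DPTA Alpha Q) (q : Q) (steps : List (Alpha × Bool)) : ℕ :=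
  ((M.statesOn q steps).map M.rank).foldr max 0

/-- `steps` forms a loop at `q` (a path of positive length from `q` to `q`). -/
def IsLoop (M : DPTA Alpha Q) (q : Q) (steps : List (Alpha × Bool)) : Prop :=
  steps ≠ [] ∧ M.follow q steps = q

/-- `M` contains an `(i,k)`-flower: loops `lam i, …, lam k` at a common state `q`,
the largest rank on `lam j` has the parity of `j` and increases strictly with `j`. -/
def HasFlower (M : DPTA Alpha Q) (i k : ℕ) : Prop :=
  ∃ (q : Q) (lam : ℕ → List (Alpha × Bool)),
    (∀ j, i ≤ j → j ≤ k → M.IsLoop q (lam j) ∧ M.maxRankOn q (lam j) % 2 = j % 2) ∧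
    (∀ j, i ≤ j → j < k → M.maxRankOn q (lam j) < M.maxRankOn q (lam (j + 1)))

/-- `q` is reachable from the initial state. -/
def Reachable (M : DPTA Alpha Q) (q : Q) : Prop :=
  ∃ steps, M.follow M.init steps = q

/-- `q` is productive: it occurs in some accepting run of `M`. -/
def Productive (M : DPTA Alpha Q) (q : Q) : Prop :=
  ∃ t ∈ M.Lang, ∃ v, M.run t v = q

/-- The transition from `q` reading `s` is used in some accepting run of `M`. -/
def ProductiveTrans (M : DPTA Alpha Q) (q : Q) (s : Alpha) : Prop :=
  ∃ t ∈ M.Lang, ∃ v, M.run t v = q ∧ t v = s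

/-- `q` is all-rejecting: started from `q`, the automaton accepts no tree. -/
def AllRejecting (M : DPTA Alpha Q) (q : Q) : Prop :=
  ∀ t, ¬ M.AcceptsFrom q t

/-- `M` is normalized: every state is reachable, every state is productive except
possibly one all-rejecting state `⊥` with `δ(⊥,σ) = (⊥,⊥)`, and every transition is
productive or of the form `δ(q,σ) = (⊥,⊥)`. -/
def Normalized (M : DPTA Alpha Q) : Prop :=
  (∀ q, M.Reachable q) ∧
  ∃ bot : Option Q,
    (∀ q, some q ≠ bot → M.Productive q) ∧
    (∀ q, some q = bot → M.AllRejecting q ∧ ∀ s, M.delta q s = (q, q)) ∧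
    (∀ q s, M.ProductiveTrans q s ∨
      (some (M.delta q s).1 = bot ∧ some (M.delta q s).2 = bot))

end DPTA


/-- `M` contains a weak `(i,k)`-flower: loops `lam i, …, lam k` such that there is a
path from a state of `lam j` to a state of `lam (j+1)`, and `lam j` is accepting
iff `j` is even. -/
def HasWeakFlower {Alpha Q : Type} (M : DPTA Alpha Q) (i k : ℕ) : Prop :=
  ∃ (q : ℕ → Q) (lam : ℕ → List (Alpha × Bool)),
    (∀ j, i ≤ j → j ≤ k →
      M.IsLoop (q j) (lam j) ∧ (Even (M.maxRankOn (q j) (lam j)) ↔ Even j)) ∧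
    (∀ j, i ≤ j → j < k →
      ∃ s ∈ M.statesOn (q j) (lam j), ∃ s' ∈ M.statesOn (q (j + 1)) (lam (j + 1)),
        ∃ steps, M.follow s steps = s')

/-!
Call a state *all-accepting* if the automaton started there accepts every tree. A weak
(0,1)-flower exists iff some accepting loop is based at a state that is not all-accepting: a
rejecting branch from a state runs, by pigeonhole, into a rejecting loop reachable from it, and
conversely a tree with a branch entering a rejecting loop and then cycling through it is rejected.

If every accepting loop is based at an all-accepting state, every accepted tree `t` has a depth
`n` at which all states of its run are all-accepting. Otherwise compactness of the space of
branches yields a branch of the run avoiding all-accepting states, and the accepting loop that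
this branch repeats contradicts the hypothesis. Every tree agreeing with `t` above depth `n` is
then accepted, so the language is open.

Conversely, let `q` be the base of an accepting loop and `r` a tree rejected from `q`.
Normalization makes the states and transitions along the loop productive, which yields an
accepted tree whose run returns to `q` infinitely often along a branch cycling through the loop;
grafting `r` at ever deeper such visits gives rejected trees converging to it.
-/

open Set

theorem List.foldr_max_zero_eq_sSup (l : List ℕ) : l.foldr max 0 = sSup {x | x ∈ l} :=
  le_antisymm (List.max_le_of_forall_le l _ fun _ hx => le_csSup l.finite_toSet.bddAbove hx)
    (csSup_le' fun _ hx => List.le_max_of_le hx le_rfl)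

theorem Nat.frequently_eq_sSup_and_eventually_le {f : ℕ → ℕ} (hf : (range f).Finite) :
    (∃ᶠ n in atTop, f n = sSup {r | ∃ᶠ n in atTop, f n = r}) ∧
      ∀ᶠ n in atTop, f n ≤ sSup {r | ∃ᶠ n in atTop, f n = r} := by
  set S := {r | ∃ᶠ n in atTop, f n = r}
  have hS : ∀ᶠ n in atTop, f n ∈ S := by
    have h : ∀ᶠ n in atTop, ∀ r ∈ range f, f n = r → r ∈ S := by
      refine hf.eventually_all.2 fun r _ => ?_
      by_cases hr : ∃ᶠ n in atTop, f n = r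
      · exact Eventually.of_forall fun _ _ => hr
      · exact (not_frequently.1 hr).mono fun _ hn h => absurd h hn
    exact h.mono fun n hn => hn _ (mem_range_self n) rfl
  have hbdd : BddAbove S := (hf.subset fun r hr => hr.exists).bddAbove
  obtain ⟨n, hn⟩ := hS.exists
  exact ⟨Nat.sSup_mem ⟨_, hn⟩ hbdd, hS.mono fun _ hn => le_csSup hbdd hn⟩

theorem Stream'.take_length_append_stream {α : Type*} (l : List α) (s : Stream' α) :
    (l ++ₛ s).take l.length = l :=
  (Stream'.take_append_of_le_length _ _ _ le_rfl).trans List.take_length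

namespace DPTA

variable {Alpha Q : Type}

theorem parityAccept_comp_add_iff (f : ℕ → ℕ) (k : ℕ) :
    ParityAccept (fun n => f (n + k)) ↔ ParityAccept f := by
  have h (r : ℕ) : (∃ᶠ n in atTop, f (n + k) = r) ↔ ∃ᶠ n in atTop, f n = r := by
    rw [← frequently_map (P := fun n => f n = r), map_add_atTop_eq_nat]
  simp only [ParityAccept, h]

theorem parityAccept_iff_of_periodic {f : ℕ → ℕ} {L : ℕ} (hf : Function.Periodic f L)
    (hL : 0 < L) : ParityAccept f ↔ Even (sSup (f '' Iio L)) := by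
  suffices {r | ∃ᶠ n in atTop, f n = r} = f '' Iio L by rw [ParityAccept, this]
  ext r
  constructor
  · intro h
    obtain ⟨n, rfl⟩ := h.exists
    exact ⟨n % L, Nat.mod_lt n hL, hf.map_mod_nat n⟩
  · rintro ⟨i, -, rfl⟩
    refine frequently_atTop.2 fun N => ⟨i + N * L, by nlinarith, ?_⟩
    simpa using hf.nat_mul N i

def subtree (t : List Bool → Alpha) (v : List Bool) : List Bool → Alpha :=
  fun u => t (v ++ u)

def pathWord (t : List Bool → Alpha) (π : ℕ → Bool) : Stream' (Alpha × Bool) :=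
  fun k => (t (pref π k), π k)

def graft (t : List Bool → Alpha) (v : List Bool) (s : List Bool → Alpha) :
    List Bool → Alpha :=
  fun u => if v <+: u then s (u.drop v.length) else t u

/-- The tree whose branch `fun k => (w.get k).2` is labelled by the letters `(w.get k).1`, and
whose subtree leaving that branch after `k` steps is `off k`. -/
def spineTree : Stream' (Alpha × Bool) → (ℕ → List Bool → Alpha) → List Bool → Alpha
  | w, _, [] => w.head.1
  | w, off, b :: u =>
    if b = w.head.2 then spineTree w.tail (fun n => off (n + 1)) u else off 0 u

def AgreeBelow (n : ℕ) (t t' : List Bool → Alpha) : Prop :=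
  ∀ v : List Bool, v.length < n → t v = t' v

theorem pref_succ (π : ℕ → Bool) (n : ℕ) : pref π (n + 1) = pref π n ++ [π n] := by
  simp only [pref, List.ofFn_succ_last, Fin.val_castSucc, Fin.val_last]

theorem pref_succ' (π : ℕ → Bool) (n : ℕ) :
    pref π (n + 1) = π 0 :: pref (fun k => π (k + 1)) n := by
  simp [pref, List.ofFn_succ]

theorem pref_add (π : ℕ → Bool) (m n : ℕ) :
    pref π (m + n) = pref π m ++ pref (fun k => π (m + k)) n := by
  simp [pref, List.ofFn_add]

theorem pref_length_eq_of_prefix {π : ℕ → Bool} {v : List Bool} {n : ℕ}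
    (h : v <+: pref π n) : pref π v.length = v :=
  List.ext_getElem (by simp [pref]) fun i _ hi => by
    rw [h.getElem hi]
    simp [pref]

theorem AgreeBelow.mono {m n : ℕ} {t t' : List Bool → Alpha} (h : AgreeBelow m t t')
    (hnm : n ≤ m) : AgreeBelow n t t' :=
  fun v hv => h v (hv.trans_le hnm)

theorem agreeBelow_graft (t : List Bool → Alpha) (v : List Bool) (s : List Bool → Alpha) :
    AgreeBelow v.length t (graft t v s) :=
  fun _ hu => (if_neg fun h => absurd h.length_le (not_le.2 hu)).symm

theorem subtree_graft (t : List Bool → Alpha) (v : List Bool) (s : List Bool → Alpha) :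
    subtree (graft t v s) v = s :=
  funext fun u => by simp [subtree, graft]

theorem spineTree_pref (w : Stream' (Alpha × Bool)) (off : ℕ → List Bool → Alpha) (k : ℕ) :
    spineTree w off (pref (fun k => (w.get k).2) k) = (w.get k).1 := by
  induction k generalizing w off with
  | zero => rfl
  | succ k ih =>
    rw [pref_succ', spineTree, if_pos rfl]
    exact ih w.tail _

theorem pathWord_spineTree (w : Stream' (Alpha × Bool)) (off : ℕ → List Bool → Alpha) :
    pathWord (spineTree w off) (fun k => (w.get k).2) = w :=
  funext fun k => Prod.ext (spineTree_pref w off k) rfl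

theorem subtree_spineTree (w : Stream' (Alpha × Bool)) (off : ℕ → List Bool → Alpha)
    (k : ℕ) :
    subtree (spineTree w off) (pref (fun k => (w.get k).2) k ++ [!(w.get k).2]) = off k := by
  induction k generalizing w off with
  | zero =>
    funext u
    simp [subtree, spineTree, pref, Stream'.head]
  | succ k ih =>
    funext u
    rw [pref_succ']
    simp only [subtree, List.cons_append, spineTree]
    exact congrFun (ih w.tail _) u

theorem isOpen_iff_forall_agreeBelow [TopologicalSpace Alpha] [DiscreteTopology Alpha]
    {L : Set (List Bool → Alpha)} :
    IsOpen L ↔ ∀ t ∈ L, ∃ n, ∀ t', AgreeBelow n t t' → t' ∈ L := by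
  constructor
  · intro hL t ht
    obtain ⟨I, u, hu, hIu⟩ := isOpen_pi_iff.1 hL t ht
    refine ⟨I.sup List.length + 1, fun t' ht' => hIu fun v hv => ?_⟩
    rw [← ht' v (Nat.lt_succ_of_le (Finset.le_sup hv))]
    exact (hu v hv).2
  · intro h
    refine isOpen_iff_forall_mem_open.2 fun t ht => ?_
    obtain ⟨n, hn⟩ := h t ht
    refine ⟨{v : List Bool | v.length < n}.pi fun v => {t v}, fun t' ht' => hn t' fun v hv => ?_,
      isOpen_set_pi (List.finite_length_lt Bool n) fun _ _ => isOpen_discrete _,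
      fun _ _ => rfl⟩
    exact (ht' v hv).symm

def walk (M : DPTA Alpha Q) (q : Q) (w : Stream' (Alpha × Bool)) (n : ℕ) : Q :=
  M.follow q (w.take n)

def AcceptsWord (M : DPTA Alpha Q) (q : Q) (w : Stream' (Alpha × Bool)) : Prop :=
  ParityAccept fun n => M.rank (M.walk q w n)

def AllAccepting (M : DPTA Alpha Q) (q : Q) : Prop :=
  ∀ t, M.AcceptsFrom q t

variable {M : DPTA Alpha Q}

theorem follow_append (q : Q) (l l' : List (Alpha × Bool)) :
    M.follow q (l ++ l') = M.follow (M.follow q l) l' :=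
  List.foldl_append

theorem mem_statesOn_iff {p q : Q} {l : List (Alpha × Bool)} :
    p ∈ M.statesOn q l ↔ ∃ i ≤ l.length, M.follow q (l.take i) = p := by
  simp [statesOn, List.mem_iff_getElem, List.getElem_scanl, follow]

theorem self_mem_statesOn (q : Q) (l : List (Alpha × Bool)) : q ∈ M.statesOn q l :=
  mem_statesOn_iff.2 ⟨0, Nat.zero_le _, rfl⟩

theorem maxRankOn_eq_sSup (q : Q) (l : List (Alpha × Bool)) :
    M.maxRankOn q l = sSup (M.rank '' {p | p ∈ M.statesOn q l}) := by
  rw [maxRankOn, List.foldr_max_zero_eq_sSup]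
  congr 1
  ext
  simp

theorem walk_succ (q : Q) (w : Stream' (Alpha × Bool)) (n : ℕ) :
    M.walk q w (n + 1) = M.next (M.walk q w n) (w.get n).1 (w.get n).2 := by
  rw [walk, Stream'.take_succ', follow_append]
  rfl

theorem walk_add (q : Q) (w : Stream' (Alpha × Bool)) (m n : ℕ) :
    M.walk q w (m + n) = M.walk (M.walk q w m) (w.drop m) n := by
  rw [walk, Stream'.take_add, follow_append]
  rfl

theorem mem_statesOn_take {p q : Q} {w : Stream' (Alpha × Bool)} {n : ℕ} :
    p ∈ M.statesOn q (w.take n) ↔ ∃ m ≤ n, M.walk q w m = p := by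
  rw [mem_statesOn_iff, Stream'.length_take]
  refine exists_congr fun m => and_congr_right fun hm => ?_
  rw [Stream'.take_take, min_eq_right hm, walk]

theorem acceptsWord_drop_iff (q : Q) (w : Stream' (Alpha × Bool)) (m : ℕ) :
    M.AcceptsWord (M.walk q w m) (w.drop m) ↔ M.AcceptsWord q w := by
  have h := parityAccept_comp_add_iff (fun n => M.rank (M.walk q w n)) m
  simp only [AcceptsWord, ← walk_add, add_comm m]
  exact h

theorem acceptsWord_append_stream_iff (q : Q) (l : List (Alpha × Bool))
    (w : Stream' (Alpha × Bool)) :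
    M.AcceptsWord q (l ++ₛ w) ↔ M.AcceptsWord (M.follow q l) w := by
  rw [← acceptsWord_drop_iff q _ l.length, Stream'.drop_append_stream, walk,
    Stream'.take_length_append_stream]

theorem walk_append_stream (q : Q) (l : List (Alpha × Bool)) (w : Stream' (Alpha × Bool))
    (n : ℕ) : M.walk q (l ++ₛ w) (l.length + n) = M.walk (M.follow q l) w n := by
  rw [walk, ← Stream'.append_take, follow_append]
  rfl

theorem walk_cycle_periodic {q : Q} {l : List (Alpha × Bool)} (hl : M.IsLoop q l) :
    Function.Periodic (M.walk q (Stream'.cycle l hl.1)) l.length := by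
  intro n
  have h := walk_append_stream (M := M) q l (Stream'.cycle l hl.1) n
  rw [← Stream'.cycle_eq, add_comm] at h
  exact h.trans (congrArg (fun p => M.walk p _ n) hl.2)

theorem statesOn_eq_image_walk_cycle {q : Q} {l : List (Alpha × Bool)} (hl : M.IsLoop q l) :
    {p | p ∈ M.statesOn q l} = M.walk q (Stream'.cycle l hl.1) '' Iio l.length := by
  have htake : (Stream'.cycle l hl.1).take l.length = l := by
    rw [Stream'.cycle_eq]
    exact Stream'.take_length_append_stream _ _
  ext p
  have h := mem_statesOn_take (M := M) (p := p) (q := q) (w := Stream'.cycle l hl.1)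
    (n := l.length)
  rw [htake] at h
  change p ∈ M.statesOn q l ↔ _
  rw [h]
  constructor
  · rintro ⟨m, -, rfl⟩
    exact ⟨m % l.length, Nat.mod_lt _ (List.length_pos_iff.2 hl.1),
      (walk_cycle_periodic hl).map_mod_nat m⟩
  · rintro ⟨m, hm, rfl⟩
    exact ⟨m, hm.le, rfl⟩

theorem walk_cycle_mem_statesOn {q : Q} {l : List (Alpha × Bool)} (hl : M.IsLoop q l) (n : ℕ) :
    M.walk q (Stream'.cycle l hl.1) n ∈ M.statesOn q l := by
  have h : M.walk q (Stream'.cycle l hl.1) n ∈ {p | p ∈ M.statesOn q l} := by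
    rw [statesOn_eq_image_walk_cycle hl]
    exact ⟨n % l.length, Nat.mod_lt _ (List.length_pos_iff.2 hl.1),
      (walk_cycle_periodic hl).map_mod_nat n⟩
  exact h

theorem acceptsWord_cycle_iff {q : Q} {l : List (Alpha × Bool)} (hl : M.IsLoop q l) :
    M.AcceptsWord q (Stream'.cycle l hl.1) ↔ Even (M.maxRankOn q l) := by
  rw [AcceptsWord, parityAccept_iff_of_periodic (f := fun n => M.rank (M.walk q _ n))
    ((walk_cycle_periodic hl).comp M.rank)
    (List.length_pos_iff.2 hl.1), maxRankOn_eq_sSup, statesOn_eq_image_walk_cycle hl,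
    image_image]

theorem exists_isLoop_walk [Finite Q] (q : Q) (w : Stream' (Alpha × Bool)) :
    ∃ i l, M.IsLoop (M.walk q w i) l ∧
      (Even (M.maxRankOn (M.walk q w i) l) ↔ M.AcceptsWord q w) := by
  obtain ⟨hfreq, hle⟩ := Nat.frequently_eq_sSup_and_eventually_le
    ((finite_range M.rank).subset (range_comp_subset_range (M.walk q w) M.rank))
  set R := sSup {r | ∃ᶠ n in atTop, M.rank (M.walk q w n) = r}
  obtain ⟨N, hN⟩ := eventually_atTop.1 hle
  have hinf : {n | M.rank (M.walk q w n) = R ∧ N ≤ n}.Infinite :=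
    Nat.frequently_atTop_iff_infinite.1 (hfreq.and_eventually (eventually_ge_atTop N))
  obtain ⟨i, ⟨hi, hNi⟩, j, -, hij, hwalk⟩ :=
    hinf.exists_lt_map_eq_of_mapsTo (mapsTo_univ (M.walk q w) _) finite_univ
  refine ⟨i, (w.drop i).take (j - i), ⟨?_, ?_⟩, ?_⟩
  · rw [← List.length_pos_iff, Stream'.length_take]
    omega
  · rw [← walk, ← walk_add, Nat.add_sub_cancel' hij.le, hwalk]
  · have hmax : IsGreatest
        (M.rank '' {p | p ∈ M.statesOn (M.walk q w i) ((w.drop i).take (j - i))}) R := by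
      refine ⟨⟨_, self_mem_statesOn _ _, hi⟩, ?_⟩
      rintro _ ⟨p, hp, rfl⟩
      obtain ⟨m, -, rfl⟩ := mem_statesOn_take.1 hp
      rw [← walk_add]
      exact hN _ (by omega)
    rw [maxRankOn_eq_sSup, hmax.csSup_eq]
    rfl

theorem runFrom_append (q : Q) (t : List Bool → Alpha) (u v : List Bool) :
    M.runFrom q t (u ++ v) = M.runFrom (M.runFrom q t u) (subtree t u) v := by
  induction u generalizing q t with
  | nil => rfl
  | cons d u ih => exact ih _ _

theorem runFrom_snoc (q : Q) (t : List Bool → Alpha) (v : List Bool) (b : Bool) :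
    M.runFrom q t (v ++ [b]) = M.next (M.runFrom q t v) (t v) b := by
  simp [runFrom_append, runFrom, subtree]

theorem runFrom_pref_eq_walk (q : Q) (t : List Bool → Alpha) (π : ℕ → Bool) (n : ℕ) :
    M.runFrom q t (pref π n) = M.walk q (pathWord t π) n := by
  induction n with
  | zero => rfl
  | succ n ih =>
    rw [pref_succ, runFrom_snoc, ih, walk_succ]
    rfl

theorem AgreeBelow.runFrom_eq {v : List Bool} {t t' : List Bool → Alpha}
    (h : AgreeBelow v.length t t') (q : Q) : M.runFrom q t v = M.runFrom q t' v := by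
  induction v generalizing q t t' with
  | nil => rfl
  | cons d v ih =>
    simp only [runFrom]
    rw [h [] (by simp)]
    exact ih (fun u hu => h (d :: u) (by simpa using hu)) _

theorem runFrom_graft (q : Q) (t : List Bool → Alpha) (v : List Bool) (s : List Bool → Alpha) :
    M.runFrom q (graft t v s) v = M.runFrom q t v :=
  ((agreeBelow_graft t v s).runFrom_eq q).symm

theorem runFrom_spineTree (q : Q) (w : Stream' (Alpha × Bool)) (off : ℕ → List Bool → Alpha)
    (n : ℕ) : M.runFrom q (spineTree w off) (pref (fun k => (w.get k).2) n) = M.walk q w n := by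
  rw [runFrom_pref_eq_walk, pathWord_spineTree]

theorem acceptsFrom_iff_forall_acceptsWord {q : Q} {t : List Bool → Alpha} :
    M.AcceptsFrom q t ↔ ∀ π, M.AcceptsWord q (pathWord t π) := by
  simp only [AcceptsFrom, AcceptsWord, runFrom_pref_eq_walk]

theorem pathWord_drop (t : List Bool → Alpha) (π : ℕ → Bool) (m : ℕ) :
    (pathWord t π).drop m = pathWord (subtree t (pref π m)) (fun k => π (m + k)) := by
  funext k
  simp only [pathWord, subtree, Stream'.drop, Stream'.get, ← pref_add, add_comm]

theorem acceptsWord_pathWord_iff {q : Q} {t : List Bool → Alpha} {π : ℕ → Bool} (m : ℕ) :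
    M.AcceptsWord q (pathWord t π) ↔
      M.AcceptsWord (M.runFrom q t (pref π m))
        (pathWord (subtree t (pref π m)) (fun k => π (m + k))) := by
  rw [← pathWord_drop, runFrom_pref_eq_walk, acceptsWord_drop_iff]

theorem acceptsWord_of_acceptsFrom_subtree {q : Q} {t : List Bool → Alpha} {π : ℕ → Bool}
    {m : ℕ} (h : M.AcceptsFrom (M.runFrom q t (pref π m)) (subtree t (pref π m))) :
    M.AcceptsWord q (pathWord t π) :=
  (acceptsWord_pathWord_iff m).2 (acceptsFrom_iff_forall_acceptsWord.1 h _)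

theorem acceptsFrom_subtree {q : Q} {t : List Bool → Alpha} (h : M.AcceptsFrom q t)
    (v : List Bool) : M.AcceptsFrom (M.runFrom q t v) (subtree t v) := by
  refine acceptsFrom_iff_forall_acceptsWord.2 fun σ => ?_
  let π : ℕ → Bool := fun k => (v ++ₛ σ).get k
  have hv : pref π v.length = v :=
    List.ext_getElem (by simp [pref]) fun i hi _ => by
      simp only [pref, List.getElem_ofFn]
      exact Stream'.get_append_left _ _ _ (by simpa [pref] using hi)
  have hσ : (fun k => π (v.length + k)) = σ := funext fun k => Stream'.get_append_right k v σ
  have h' := (acceptsWord_pathWord_iff v.length).1 (acceptsFrom_iff_forall_acceptsWord.1 h π)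
  rwa [hv, hσ] at h'

theorem acceptsFrom_graft {q : Q} {t s : List Bool → Alpha} {v : List Bool}
    (ht : M.AcceptsFrom q t) (hs : M.AcceptsFrom (M.runFrom q t v) s) :
    M.AcceptsFrom q (graft t v s) := by
  refine acceptsFrom_iff_forall_acceptsWord.2 fun π => ?_
  by_cases hv : pref π v.length = v
  · apply acceptsWord_of_acceptsFrom_subtree (m := v.length)
    rwa [hv, runFrom_graft, subtree_graft]
  · have h : pathWord (graft t v s) π = pathWord t π := funext fun k => by
      simp only [pathWord, graft, if_neg fun h => hv (pref_length_eq_of_prefix h)]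
    rw [h]
    exact acceptsFrom_iff_forall_acceptsWord.1 ht π

theorem acceptsFrom_spineTree {q : Q} {w : Stream' (Alpha × Bool)}
    {off : ℕ → List Bool → Alpha} (hw : M.AcceptsWord q w)
    (hoff : ∀ k, M.AcceptsFrom (M.next (M.walk q w k) (w.get k).1 !(w.get k).2) (off k)) :
    M.AcceptsFrom q (spineTree w off) := by
  refine acceptsFrom_iff_forall_acceptsWord.2 fun π => ?_
  by_cases hπ : ∀ k, π k = (w.get k).2
  · rwa [show π = fun k => (w.get k).2 from funext hπ, pathWord_spineTree]
  push Not at hπ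
  set k := Nat.find hπ
  have hpref : pref π k = pref (fun k => (w.get k).2) k :=
    List.ofFn_inj.2 (funext fun i => not_not.1 (Nat.find_min hπ i.2))
  have hk : π k = !(w.get k).2 := Bool.eq_not_iff.2 (Nat.find_spec hπ)
  apply acceptsWord_of_acceptsFrom_subtree (m := k + 1)
  rw [pref_succ, hpref, hk, subtree_spineTree, runFrom_snoc, runFrom_spineTree, spineTree_pref]
  exact hoff k

theorem allAccepting_runFrom {q : Q} (h : M.AllAccepting q) (t : List Bool → Alpha)
    (v : List Bool) : M.AllAccepting (M.runFrom q t v) := fun s => by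
  simpa only [subtree_graft, runFrom_graft] using acceptsFrom_subtree (h (graft t v s)) v

theorem not_allAccepting_iff [Finite Q] {p : Q} :
    ¬M.AllAccepting p ↔
      ∃ ρ l, M.IsLoop (M.follow p ρ) l ∧ ¬Even (M.maxRankOn (M.follow p ρ) l) := by
  constructor
  · intro h
    simp only [AllAccepting, acceptsFrom_iff_forall_acceptsWord, not_forall] at h
    obtain ⟨t, π, hπ⟩ := h
    obtain ⟨i, l, hl, hiff⟩ := exists_isLoop_walk (M := M) p (pathWord t π)
    exact ⟨_, l, hl, hiff.not.2 hπ⟩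
  · rintro ⟨ρ, l, hl, hodd⟩ hp
    set w : Stream' (Alpha × Bool) := ρ ++ₛ Stream'.cycle l hl.1
    have hw : ¬M.AcceptsWord p w := by
      rwa [acceptsWord_append_stream_iff, acceptsWord_cycle_iff hl]
    refine hw ?_
    simpa only [pathWord_spineTree] using acceptsFrom_iff_forall_acceptsWord.1
      (hp (spineTree w fun _ _ => (w.get 0).1)) (fun k => (w.get k).2)

theorem not_allRejecting_of_mem_isLoop {p q : Q} {l : List (Alpha × Bool)} (hl : M.IsLoop q l)
    (he : Even (M.maxRankOn q l)) (hp : p ∈ M.statesOn q l)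
    (hfix : ∀ s, M.delta p s = (p, p)) : ¬M.AllRejecting p := by
  have hfollow : ∀ l' : List (Alpha × Bool), M.follow p l' = p :=
    List.foldl_fixed' fun s => by cases s.2 <;> simp [next, hfix]
  have hqp : q = p := by
    obtain ⟨i, -, hi⟩ := mem_statesOn_iff.1 hp
    rw [← hl.2, ← List.take_append_drop i l, follow_append, hi, hfollow]
  subst hqp
  have hacc := (acceptsWord_cycle_iff hl).2 he
  refine fun hrej => hrej (fun _ => (Stream'.cycle l hl.1).head.1)
    (acceptsFrom_iff_forall_acceptsWord.2 fun π => ?_)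
  simpa only [AcceptsWord, walk, hfollow] using hacc

theorem Normalized.productive_of_mem_isLoop (hM : M.Normalized) {p q : Q}
    {l : List (Alpha × Bool)} (hl : M.IsLoop q l) (he : Even (M.maxRankOn q l))
    (hp : p ∈ M.statesOn q l) : M.Productive p := by
  obtain ⟨-, bot, hprod, hbot, -⟩ := hM
  exact hprod p fun hb => not_allRejecting_of_mem_isLoop hl he hp (hbot p hb).2 (hbot p hb).1

theorem Normalized.productiveTrans_of_next_mem_isLoop (hM : M.Normalized) {p q : Q}
    {l : List (Alpha × Bool)} (hl : M.IsLoop q l) (he : Even (M.maxRankOn q l)) {s : Alpha}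
    {b : Bool} (hp : M.next p s b ∈ M.statesOn q l) : M.ProductiveTrans p s := by
  obtain ⟨-, bot, -, hbot, htrans⟩ := hM
  refine (htrans p s).resolve_right fun ⟨h1, h2⟩ => ?_
  have hb : some (M.next p s b) = bot := by cases b <;> simpa [next]
  exact not_allRejecting_of_mem_isLoop hl he hp (hbot _ hb).2 (hbot _ hb).1

theorem ProductiveTrans.exists_acceptsFrom_next {p : Q} {s : Alpha} (h : M.ProductiveTrans p s)
    (b : Bool) : ∃ t, M.AcceptsFrom (M.next p s b) t := by
  obtain ⟨t, ht, v, hv, hs⟩ := h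
  have hv' : M.runFrom M.init t v = p := hv
  exact ⟨_, by simpa only [runFrom_snoc, hv', hs] using acceptsFrom_subtree ht (v ++ [b])⟩

theorem Normalized.exists_mem_lang_forall_exists_run_eq (hM : M.Normalized) {q : Q}
    {l : List (Alpha × Bool)} (hl : M.IsLoop q l) (he : Even (M.maxRankOn q l)) :
    ∃ t ∈ M.Lang, ∀ n, ∃ v : List Bool, n ≤ v.length ∧ M.run t v = q := by
  set w := Stream'.cycle l hl.1
  have hoff (k : ℕ) :
      ∃ s, M.AcceptsFrom (M.next (M.walk q w k) (w.get k).1 !(w.get k).2) s := by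
    refine (hM.productiveTrans_of_next_mem_isLoop hl he (b := (w.get k).2) ?_)
      |>.exists_acceptsFrom_next _
    rw [← walk_succ]
    exact walk_cycle_mem_statesOn hl _
  choose off hoff using hoff
  obtain ⟨t, ht, v, hv⟩ := hM.productive_of_mem_isLoop hl he (self_mem_statesOn q l)
  have hspine := acceptsFrom_spineTree ((acceptsWord_cycle_iff hl).2 he) hoff
  refine ⟨graft t v (spineTree w off), acceptsFrom_graft ht (by rw [← run, hv]; exact hspine),
    fun n => ⟨v ++ pref (fun k => (w.get k).2) (n * l.length), ?_, ?_⟩⟩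
  · have := List.length_pos_iff.2 hl.1
    simp only [List.length_append, pref, List.length_ofFn]
    nlinarith
  · rw [run, runFrom_append, runFrom_graft, subtree_graft, ← run, hv, runFrom_spineTree]
    exact_mod_cast (walk_cycle_periodic hl).nat_mul_eq n

theorem exists_depth_allAccepting [Finite Q]
    (h : ∀ q l, M.IsLoop q l → Even (M.maxRankOn q l) → M.AllAccepting q)
    {q : Q} {t : List Bool → Alpha} (ht : M.AcceptsFrom q t) :
    ∃ n, ∀ π, M.AllAccepting (M.runFrom q t (pref π n)) := by
  by_contra! hc
  set C : ℕ → Set (ℕ → Bool) := fun n => {π | ¬M.AllAccepting (M.runFrom q t (pref π n))}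
  have hclosed (n : ℕ) : IsClosed (C n) := by
    have hcont : Continuous fun (π : ℕ → Bool) (i : Fin n) => π i :=
      continuous_pi fun i => continuous_apply _
    exact (isClosed_discrete {r | ¬M.AllAccepting (M.runFrom q t (List.ofFn r))}).preimage hcont
  have hanti (n : ℕ) : C (n + 1) ⊆ C n := fun π hπ hn => hπ (by
    rw [pref_succ, runFrom_append]
    exact allAccepting_runFrom hn _ _)
  obtain ⟨π, hπ⟩ :=
    (hclosed 0).isCompact.nonempty_iInter_of_sequence_nonempty_isCompact_isClosed C hanti hc hclosed
  rw [mem_iInter] at hπ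
  obtain ⟨i, l, hl, hiff⟩ := exists_isLoop_walk (M := M) q (pathWord t π)
  refine hπ i ?_
  rw [runFrom_pref_eq_walk]
  exact h _ l hl (hiff.2 (acceptsFrom_iff_forall_acceptsWord.1 ht π))

theorem acceptsFrom_of_agreeBelow {n : ℕ} {q : Q} {t t' : List Bool → Alpha}
    (hn : ∀ π, M.AllAccepting (M.runFrom q t (pref π n))) (ht' : AgreeBelow n t t') :
    M.AcceptsFrom q t' := by
  refine acceptsFrom_iff_forall_acceptsWord.2 fun π =>
    acceptsWord_of_acceptsFrom_subtree (m := n) ?_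
  have h' : AgreeBelow (pref π n).length t t' := ht'.mono List.length_ofFn.le
  rw [← h'.runFrom_eq]
  exact hn π _

theorem isOpen_lang_of_forall_isLoop_allAccepting [Finite Q] [TopologicalSpace Alpha]
    [DiscreteTopology Alpha]
    (h : ∀ q l, M.IsLoop q l → Even (M.maxRankOn q l) → M.AllAccepting q) :
    IsOpen M.Lang := by
  refine isOpen_iff_forall_agreeBelow.2 fun t ht => ?_
  obtain ⟨n, hn⟩ := exists_depth_allAccepting h ht
  exact ⟨n, fun t' ht' => acceptsFrom_of_agreeBelow hn ht'⟩

theorem Normalized.not_isOpen_lang [TopologicalSpace Alpha] [DiscreteTopology Alpha]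
    (hM : M.Normalized) {q : Q} {l : List (Alpha × Bool)} (hl : M.IsLoop q l)
    (he : Even (M.maxRankOn q l)) (hq : ¬M.AllAccepting q) : ¬IsOpen M.Lang := by
  intro hopen
  obtain ⟨r, hr⟩ := not_forall.1 hq
  obtain ⟨t, ht, hdeep⟩ := hM.exists_mem_lang_forall_exists_run_eq hl he
  obtain ⟨n, hn⟩ := isOpen_iff_forall_agreeBelow.1 hopen t ht
  obtain ⟨v, hv, hrun⟩ := hdeep n
  have hrun' : M.runFrom M.init t v = q := hrun
  have hsub := acceptsFrom_subtree (hn _ ((agreeBelow_graft t v r).mono hv)) v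
  rw [runFrom_graft, subtree_graft, hrun'] at hsub
  exact hr hsub

end DPTA

theorem hasWeakFlower_zero_one_iff {Alpha Q : Type} [Finite Q] (M : DPTA Alpha Q) :
    HasWeakFlower M 0 1 ↔
      ∃ q l, M.IsLoop q l ∧ Even (M.maxRankOn q l) ∧ ¬M.AllAccepting q := by
  simp_rw [DPTA.not_allAccepting_iff]
  constructor
  · rintro ⟨q, l, hloop, hpath⟩
    obtain ⟨hl₀, he₀⟩ := hloop 0 le_rfl zero_le_one
    obtain ⟨hl₁, he₁⟩ := hloop 1 zero_le_one le_rfl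
    obtain ⟨s, hs, s', hs', c, hc⟩ := hpath 0 le_rfl zero_lt_one
    obtain ⟨k, -, rfl⟩ := DPTA.mem_statesOn_iff.1 hs
    obtain ⟨k', -, rfl⟩ := DPTA.mem_statesOn_iff.1 hs'
    have hρ : M.follow (q 0) ((l 0).take k ++ c ++ (l 1).drop k') = q 1 := by
      rw [DPTA.follow_append, DPTA.follow_append, hc, ← DPTA.follow_append,
        List.take_append_drop, hl₁.2]
    refine ⟨q 0, l 0, hl₀, he₀.2 Even.zero, (l 0).take k ++ c ++ (l 1).drop k', l 1, ?_⟩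
    rw [hρ]
    exact ⟨hl₁, fun h => Nat.not_even_one (he₁.1 h)⟩
  · rintro ⟨q, l, hl, he, ρ, l', hl', ho⟩
    refine ⟨fun j => if j = 0 then q else M.follow q ρ, fun j => if j = 0 then l else l',
      fun j _ hj => ?_, fun j _ hj => ?_⟩
    · interval_cases j
      · exact ⟨hl, iff_of_true he Even.zero⟩
      · exact ⟨hl', iff_of_false ho Nat.not_even_one⟩
    · obtain rfl : j = 0 := by omega
      exact ⟨q, DPTA.self_mem_statesOn _ _, _, DPTA.self_mem_statesOn _ _, ρ, rfl⟩

theorem open_iff_no_weak_01_flower_general {Alpha Q : Type} [Fintype Q]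
    [TopologicalSpace Alpha] [DiscreteTopology Alpha]
    (M : DPTA Alpha Q) (hM : M.Normalized) :
    IsOpen M.Lang ↔ ¬ HasWeakFlower M 0 1 := by
  rw [hasWeakFlower_zero_one_iff]
  constructor
  · rintro hopen ⟨q, l, hl, he, hq⟩
    exact hM.not_isOpen_lang hl he hq hopen
  · intro h
    exact DPTA.isOpen_lang_of_forall_isLoop_allAccepting fun q l hl he =>
      not_not.1 fun hq => h ⟨q, l, hl, he, hq⟩

/-- the language of a normalized deterministic tree automaton is open
iff the automaton contains no weak `(0,1)`-flower. -/
theorem open_iff_no_weak_01_flower {Alpha Q : Type} [Fintype Alpha] [Nonempty Alpha] [Fintype Q]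
    [TopologicalSpace Alpha] [DiscreteTopology Alpha]
    (M : DPTA Alpha Q) (hM : M.Normalized) :
    IsOpen M.Lang ↔ ¬ HasWeakFlower M 0 1 :=
  open_iff_no_weak_01_flower_general M hM
end
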